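/- arXiv:2509.17612 — 2 statements merged into one kernel-verified Lean document; each statement's English description precedes it below -/
import Mathlib

section
/- Let 𝓕 be a class of Kripke frames over a finite alphabet A that is closed under countable disjoint sums. Then the modal depth of 𝓕 equals the modal depth of its logic: md(𝓕) = md(Log(𝓕)). -/
set_option maxHeartbeats 1000000

/-- Modal formulas over an alphabet `A` of diamonds, with variables `pₙ`,
falsum and implication as primitive Boolean connectives. -/
inductive MF (A : Type) : Type
  | var : ℕ → MF A
  | bot : MF A
  | imp : MF A → MF A → MF A
  | dia : A → MF A → MF A

namespace MF

variable {A : Type}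

def neg (φ : MF A) : MF A := .imp φ .bot
def top : MF A := neg .bot
def or (φ ψ : MF A) : MF A := .imp (neg φ) ψ
def and (φ ψ : MF A) : MF A := neg (.imp φ (neg ψ))
def box (a : A) (φ : MF A) : MF A := neg (.dia a (neg φ))
def iff (φ ψ : MF A) : MF A := and (.imp φ ψ) (.imp ψ φ)

def bigOr : List (MF A) → MF A
  | [] => .bot
  | φ :: r => or φ (bigOr r)

def bigAnd : List (MF A) → MF A
  | [] => top
  | φ :: r => and φ (bigAnd r)

def subst (σ : ℕ → MF A) : MF A → MF A
  | .var n => σ n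
  | .bot => .bot
  | .imp φ ψ => .imp (subst σ φ) (subst σ ψ)
  | .dia a φ => .dia a (subst σ φ)

/-- `φ` is a `k`-formula: all its variables are among `p₀,…,p_{k-1}`. -/
def varsBelow (k : ℕ) : MF A → Prop
  | .var n => n < k
  | .bot => True
  | .imp φ ψ => varsBelow k φ ∧ varsBelow k ψ
  | .dia _ φ => varsBelow k φ

/-- Modal depth: maximal number of nested modalities. -/
def depth : MF A → ℕ
  | .var _ => 0
  | .bot => 0
  | .imp φ ψ => max (depth φ) (depth ψ)
  | .dia _ φ => depth φ + 1

end MF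

/-- Truth in a Kripke model `(X, R, θ)` at a point. -/
def satM {A X : Type} (R : A → X → X → Prop) (θ : ℕ → Set X) : X → MF A → Prop
  | w, MF.var n => w ∈ θ n
  | _, MF.bot => False
  | w, MF.imp φ ψ => satM R θ w φ → satM R θ w ψ
  | w, MF.dia a φ => ∃ v, R a w v ∧ satM R θ v φ

/-- Validity in a Kripke frame. -/
def validM {A X : Type} (R : A → X → X → Prop) (φ : MF A) : Prop :=
  ∀ θ w, satM R θ w φ

/-- `φ` is a substitution instance of a classical propositional tautology
(equivalently: true under every Boolean valuation treating variables and
diamond formulas as atoms). -/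
def IsTautInstance {A : Type} (φ : MF A) : Prop :=
  ∀ f : MF A → Prop, ¬ f .bot → (∀ ψ χ, f (.imp ψ χ) ↔ (f ψ → f χ)) → f φ

/-- `L` is a normal modal logic over `A`. -/
structure IsNormalLogic {A : Type} (L : Set (MF A)) : Prop where
  taut : ∀ φ : MF A, IsTautInstance φ → φ ∈ L
  dia_bot : ∀ a : A, (MF.dia a MF.bot).neg ∈ L
  dia_or : ∀ a : A,
    MF.imp (.dia a (MF.or (.var 0) (.var 1))) (MF.or (.dia a (.var 0)) (.dia a (.var 1))) ∈ L
  mp : ∀ {φ ψ : MF A}, MF.imp φ ψ ∈ L → φ ∈ L → ψ ∈ L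
  subst_mem : ∀ {φ : MF A} (σ : ℕ → MF A), φ ∈ L → φ.subst σ ∈ L
  mono : ∀ (a : A) {φ ψ : MF A}, MF.imp φ ψ ∈ L → MF.imp (.dia a φ) (.dia a ψ) ∈ L

/-- `L` is `k`-finite: there are finitely many `k`-formulas up to `L`-equivalence. -/
def kFinite {A : Type} (L : Set (MF A)) (k : ℕ) : Prop :=
  ∃ S : Finset (MF A), ∀ φ : MF A, φ.varsBelow k → ∃ ψ ∈ S, MF.iff φ ψ ∈ L

def LocallyTabular {A : Type} (L : Set (MF A)) : Prop := ∀ k : ℕ, kFinite L k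

/-- `◇_S φ`, the disjunction of `◇φ` over `◇ ∈ S`. -/
noncomputable def diaS {A : Type} (S : Finset A) (φ : MF A) : MF A :=
  MF.bigOr (S.toList.map (fun a => MF.dia a φ))

/-- `(◇_S)^n φ`. -/
noncomputable def diaSpow {A : Type} (S : Finset A) : ℕ → MF A → MF A
  | 0, φ => φ
  | n + 1, φ => diaS S (diaSpow S n φ)

/-- `◇_S^{≤ m} φ = ⋁_{i ≤ m} (◇_S)^i φ`. -/
noncomputable def diaSle {A : Type} (S : Finset A) (m : ℕ) (φ : MF A) : MF A :=
  MF.bigOr ((List.range (m + 1)).map (fun i => diaSpow S i φ))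

/-- `□* φ = ¬◇_S^{≤ m}¬φ`. -/
noncomputable def boxSle {A : Type} (S : Finset A) (m : ℕ) (φ : MF A) : MF A :=
  MF.neg (diaSle S m (MF.neg φ))

/-- The pretransitivity formula `atr_S(m) = (◇_S)^{m+1} p₀ → ◇_S^{≤m} p₀`. -/
noncomputable def atrS {A : Type} (S : Finset A) (m : ℕ) : MF A :=
  MF.imp (diaSpow S (m + 1) (.var 0)) (diaSle S m (.var 0))

/-- The finite-height formulas `B_h^{≤m}` over the compound modality `◇_S^{≤m}`:
`B₀ = ⊥`, `B_h = p_h → □*(◇* p_h ∨ B_{h-1})`. -/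
noncomputable def BstarS {A : Type} (S : Finset A) (m : ℕ) : ℕ → MF A
  | 0 => .bot
  | h + 1 => MF.imp (.var (h + 1))
      (boxSle S m (MF.or (diaSle S m (.var (h + 1))) (BstarS S m h)))

/-- Unimodal finite-height formulas: `B₀ = ⊥`, `B_h = p_h → □(◇ p_h ∨ B_{h-1})`. -/
def BformU : ℕ → MF Unit
  | 0 => .bot
  | h + 1 => MF.imp (.var (h + 1))
      (MF.box () (MF.or (MF.dia () (.var (h + 1))) (BformU h)))

/-- `p_i ∧ ◇_S (p_{i+1} ∧ ◇_S ( … ∧ ◇_S p_{i+n}) … )`. -/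
noncomputable def chainS {A : Type} (S : Finset A) : ℕ → ℕ → MF A
  | i, 0 => .var i
  | i, n + 1 => MF.and (.var i) (diaS S (chainS S (i + 1) n))

/-- The list of pairs `(i, j)` with `i < j ≤ n`. -/
def pairsLT (n : ℕ) : List (ℕ × ℕ) :=
  (List.range (n + 1)).flatMap (fun j => (List.range j).map (fun i => (i, j)))

/-- The reducible-path formula `R_m(◇_S)`. -/
noncomputable def RmS {A : Type} (S : Finset A) (m : ℕ) : MF A :=
  MF.imp (chainS S 0 (m + 1))
    (MF.or
      (MF.bigOr ((pairsLT (m + 1)).map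
        (fun p => diaSpow S p.1 (MF.and (.var p.1) (.var p.2)))))
      (MF.bigOr ((pairsLT m).map
        (fun p => diaSpow S p.1 (MF.and (.var p.1) (diaS S (.var (p.2 + 1))))))))

/-- `n`-fold relational composition: `R⁰ = Id`, `R^{n+1} = R ∘ Rⁿ`. -/
def relPow {X : Type} (R : X → X → Prop) : ℕ → X → X → Prop
  | 0 => fun a b => a = b
  | n + 1 => fun a c => ∃ b, R a b ∧ relPow R n b c

/-- Reflexive transitive closure `R* = ⋃ₙ Rⁿ`. -/
def relStar {X : Type} (R : X → X → Prop) (a b : X) : Prop := ∃ n, relPow R n a b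

/-- `R` is `m`-transitive: `R^{m+1} ⊆ R^{≤ m}`. -/
def mTransitive {X : Type} (R : X → X → Prop) (m : ℕ) : Prop :=
  ∀ a b, relPow R (m + 1) a b → ∃ i ≤ m, relPow R i a b

/-- The union `R_F = ⋃_{◇ ∈ A} R_◇`. -/
def unionRel {A X : Type} (R : A → X → X → Prop) : X → X → Prop :=
  fun a b => ∃ i, R i a b

/-- `R⁻¹[V] = {x ∣ ∃ y ∈ V, x R y}`. -/
def diaPre {X : Type} (R : X → X → Prop) (V : Set X) : Set X := {x | ∃ y ∈ V, R x y}

/-- The height of `(X, R)` is at most `h`: there is no strictly ascending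
(h+1)-chain with respect to `R*`. -/
def heightLE {X : Type} (R : X → X → Prop) (h : ℕ) : Prop :=
  ¬ ∃ x : ℕ → X, ∀ i < h, relStar R (x i) (x (i + 1)) ∧ ¬ relStar R (x (i + 1)) (x i)

/-- A partition is `R`-tuned. -/
def RTuned {X : Type} (R : X → X → Prop) (𝒰 : Set (Set X)) : Prop :=
  ∀ U ∈ 𝒰, ∀ V ∈ 𝒰, (∃ a ∈ U, ∃ b ∈ V, R a b) → ∀ a ∈ U, ∃ b ∈ V, R a b

/-- A partition is tuned in the frame `(X, (R_◇)_{◇ ∈ A})`. -/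
def TunedIn {A X : Type} (R : A → X → X → Prop) (𝒰 : Set (Set X)) : Prop :=
  ∀ a : A, RTuned (R a) 𝒰

/-- `𝒰` refines `𝒱`: every block of `𝒰` is included in a block of `𝒱`. -/
def Refines {X : Type} (𝒰 𝒱 : Set (Set X)) : Prop := ∀ U ∈ 𝒰, ∃ V ∈ 𝒱, U ⊆ V

/-- The equivalence `≡_𝒱` induced by a family of sets. -/
def famEq {X : Type} (𝒱 : Set (Set X)) (a b : X) : Prop := ∀ V ∈ 𝒱, (a ∈ V ↔ b ∈ V)

/-- The set of equivalence classes of a relation. -/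
def eqClasses {X : Type} (E : X → X → Prop) : Set (Set X) := {C | ∃ x, C = {y | E x y}}

/-- Tunedness condition for abstract normal operators `g_◇` on the powerset. -/
def gTuned {A X : Type} (g : A → Set X → Set X) (𝒰 : Set (Set X)) : Prop :=
  ∀ a : A, ∀ U ∈ 𝒰, ∀ V ∈ 𝒰, (V ∩ g a U).Nonempty → V ⊆ g a U

/-- `C` is a subalgebra of the modal algebra `(𝒫(X), ∪, ∩, ᶜ, (g_◇))`. -/
def IsSubalg {A X : Type} (g : A → Set X → Set X) (C : Set (Set X)) : Prop :=
  ∅ ∈ C ∧ Set.univ ∈ C ∧ (∀ U ∈ C, ∀ V ∈ C, U ∪ V ∈ C) ∧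
    (∀ U ∈ C, ∀ V ∈ C, U ∩ V ∈ C) ∧ (∀ U ∈ C, Uᶜ ∈ C) ∧ (∀ U ∈ C, ∀ a : A, g a U ∈ C)

/-- The subalgebra generated by `𝒬`. -/
def genAlg {A X : Type} (g : A → Set X → Set X) (𝒬 : Set (Set X)) : Set (Set X) :=
  ⋂₀ {C | IsSubalg g C ∧ 𝒬 ⊆ C}

/-- Points of a model indistinguishable by `k`-formulas of depth at most `d`. -/
def modEq {A X : Type} (R : A → X → X → Prop) (θ : ℕ → Set X) (k d : ℕ) (a b : X) : Prop :=
  ∀ φ : MF A, φ.varsBelow k → φ.depth ≤ d → (satM R θ a φ ↔ satM R θ b φ)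

/-- Points of a model indistinguishable by all `k`-formulas. -/
def modEqAll {A X : Type} (R : A → X → X → Prop) (θ : ℕ → Set X) (k : ℕ) (a b : X) : Prop :=
  ∀ φ : MF A, φ.varsBelow k → (satM R θ a φ ↔ satM R θ b φ)

/-- The modal depth of the `k`-model `(X, R, θ)` is at most `d`. -/
def mdModelLE {A X : Type} (R : A → X → X → Prop) (θ : ℕ → Set X) (k d : ℕ) : Prop :=
  ∀ e : ℕ, modEq R θ k e ≠ modEq R θ k (e + 1) → e ≤ d

/-- Bundled Kripke frames over the alphabet `A`. -/
structure KFrame (A : Type) : Type 1 where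
  W : Type
  R : A → W → W → Prop

/-- The logic of a class of Kripke frames. -/
def LogC {A : Type} (𝓕 : Set (KFrame A)) : Set (MF A) :=
  {φ | ∀ F ∈ 𝓕, validM F.R φ}

/-- `Y` is an upset of the frame: `R_◇[Y] ⊆ Y` for every `◇`. -/
def UpsetIn {A X : Type} (R : A → X → X → Prop) (Y : Set X) : Prop :=
  ∀ a : A, ∀ y ∈ Y, ∀ z, R a y z → z ∈ Y

/-- The relations of a frame restricted to a subset. -/
def restrR {A X : Type} (R : A → X → X → Prop) (Y : Set X) : A → Y → Y → Prop :=
  fun a u v => R a u.val v.val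

/-- A valuation restricted to a subset. -/
def restrV {X : Type} (θ : ℕ → Set X) (Y : Set X) : ℕ → Set Y :=
  fun n => {u | u.val ∈ θ n}

/-- The restriction `F ↾ Y` of a frame to a subset of its domain. -/
def KFrame.restrict {A : Type} (F : KFrame A) (Y : Set F.W) : KFrame A :=
  ⟨Y, restrR F.R Y⟩

/-- The induced partitions `𝒱_d`: `𝒱₀ = X/≡_𝒱` and `𝒱_{d+1}` is the quotient by
the family `𝒱_d ∪ {R_◇⁻¹[V] : ◇ ∈ A, V ∈ 𝒱_d}`. -/
def stageClasses {A X : Type} (R : A → X → X → Prop) (𝒱 : Set (Set X)) : ℕ → Set (Set X)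
  | 0 => eqClasses (famEq 𝒱)
  | d + 1 =>
      eqClasses (famEq (stageClasses R 𝒱 d ∪
        {V' | ∃ a : A, ∃ V ∈ stageClasses R 𝒱 d, V' = diaPre (R a) V}))

/-- `𝒱_ω = ⋃_d 𝒱_d`. -/
def stageUnion {A X : Type} (R : A → X → X → Prop) (𝒱 : Set (Set X)) : Set (Set X) :=
  ⋃ d : ℕ, stageClasses R 𝒱 d

/-- `md(V) = min {d ∣ V ∈ 𝒱_d}` (as an extended natural). -/
noncomputable def mdBlock {A X : Type} (R : A → X → X → Prop) (𝒱 : Set (Set X))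
    (V : Set X) : ℕ∞ :=
  ⨅ d ∈ {d : ℕ | V ∈ stageClasses R 𝒱 d}, (d : ℕ∞)

/-- `md(𝒱) = sup {md(V) ∣ V ∈ 𝒱_ω}`. -/
noncomputable def mdFam {A X : Type} (R : A → X → X → Prop) (𝒱 : Set (Set X)) : ℕ∞ :=
  ⨆ V ∈ stageUnion R 𝒱, mdBlock R 𝒱 V

/-- The modal depth of a frame: `sup` of `md(𝒱)` over finite families `𝒱`. -/
noncomputable def mdFrame {A : Type} (F : KFrame A) : ℕ∞ :=
  ⨆ 𝒱 ∈ {𝒱 : Set (Set F.W) | 𝒱.Finite}, mdFam F.R 𝒱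

/-- The modal depth of a class of frames. -/
noncomputable def mdClass {A : Type} (𝓕 : Set (KFrame A)) : ℕ∞ :=
  ⨆ F ∈ 𝓕, mdFrame F

/-- `md(L) = sup_φ min {md(ψ) ∣ φ ↔ ψ ∈ L}`. -/
noncomputable def mdLogic {A : Type} (L : Set (MF A)) : ℕ∞ :=
  ⨆ φ : MF A, ⨅ ψ ∈ {ψ : MF A | MF.iff φ ψ ∈ L}, (ψ.depth : ℕ∞)

/-- `tra(𝓕)`: the least `m` such that every frame in `𝓕` is `m`-transitive. -/
noncomputable def traClass {A : Type} (𝓕 : Set (KFrame A)) : ℕ∞ :=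
  ⨅ m ∈ {m : ℕ | ∀ F ∈ 𝓕, mTransitive (unionRel F.R) m}, (m : ℕ∞)

/-- The disjoint sum of a family of frames. -/
def disjSum {A I : Type} (F : I → KFrame A) : KFrame A where
  W := Σ i : I, (F i).W
  R a x y := ∃ (i : I) (u v : (F i).W), x = ⟨i, u⟩ ∧ y = ⟨i, v⟩ ∧ (F i).R a u v

/-- The cluster of a point: its equivalence class under `a R* b ∧ b R* a`. -/
def clusterOf {X : Type} (R : X → X → Prop) (x : X) : Set X :=
  {y | relStar R x y ∧ relStar R y x}

/-- `clust(𝓕)`: the restrictions of frames in `𝓕` to their clusters. -/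
def clustC {A : Type} (𝓕 : Set (KFrame A)) : Set (KFrame A) :=
  {G | ∃ F ∈ 𝓕, ∃ x : F.W, G = F.restrict (clusterOf (unionRel F.R) x)}

/-!
For a `k`-model `(X, R, θ)` and `𝒱 = {θ p₀, …, θ p_{k-1}}`, the partition `𝒱_d` is the partition
into classes of `d`-equivalence (agreement on `k`-formulas of depth `≤ d`). There are finitely
many `d`-types, each defined by a characteristic formula of depth `d`, so `(d+1)`-equivalence is
`d`-equivalence plus the back-and-forth condition for `d`-equivalence, which is exactly what
refining by the sets `R_◇⁻¹[V]` adds. Hence `md(𝒱) ≤ d` means that `d`-equivalence is already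
full modal equivalence.

`md(𝓕) ≤ md(Log 𝓕)`: a block of depth `m + 1` yields two points that are `m`- but not
`(m+1)`-equivalent, and a formula separating them has no equivalent of depth `≤ m`.
`md(Log 𝓕) ≤ md(𝓕) = d`: a formula `φ` is equivalent to the disjunction of the `d`-types realised
together with `φ` in `𝓕`, because two points of frames in `𝓕` with the same `d`-type are
`d`-equivalent in their disjoint sum, which lies in `𝓕`, hence agree on `φ`.
-/

namespace MF

variable {A : Type}

@[simp] lemma depth_neg (φ : MF A) : φ.neg.depth = φ.depth := by simp [neg, depth]

@[simp] lemma depth_and (φ ψ : MF A) : (φ.and ψ).depth = max φ.depth ψ.depth := by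
  simp [MF.and, neg, depth]

@[simp] lemma varsBelow_neg {k : ℕ} (φ : MF A) : φ.neg.varsBelow k ↔ φ.varsBelow k := by
  simp [neg, varsBelow]

@[simp] lemma varsBelow_and {k : ℕ} (φ ψ : MF A) :
    (φ.and ψ).varsBelow k ↔ φ.varsBelow k ∧ ψ.varsBelow k := by
  simp [MF.and, neg, varsBelow]

lemma varsBelow.mono {k k' : ℕ} (hk : k ≤ k') {φ : MF A} (h : φ.varsBelow k) :
    φ.varsBelow k' := by
  induction φ with
  | var n => exact lt_of_lt_of_le h hk
  | bot => trivial
  | imp φ ψ ihφ ihψ => exact ⟨ihφ h.1, ihψ h.2⟩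
  | dia a φ ih => exact ih h

lemma exists_varsBelow (φ : MF A) : ∃ k, φ.varsBelow k := by
  induction φ with
  | var n => exact ⟨n + 1, Nat.lt_succ_self n⟩
  | bot => exact ⟨0, trivial⟩
  | imp φ ψ ihφ ihψ =>
    obtain ⟨k, hk⟩ := ihφ
    obtain ⟨k', hk'⟩ := ihψ
    exact ⟨max k k', hk.mono (le_max_left k k'), hk'.mono (le_max_right k k')⟩
  | dia a φ ih => exact ih

lemma depth_bigOr_le {l : List (MF A)} {d : ℕ} (h : ∀ φ ∈ l, φ.depth ≤ d) :
    (bigOr l).depth ≤ d := by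
  induction l with
  | nil => simp [bigOr, depth]
  | cons φ l ih =>
    simp only [List.mem_cons, forall_eq_or_imp] at h
    simpa [bigOr, MF.or, depth] using ⟨h.1, ih h.2⟩

def truncVars (k : ℕ) : ℕ → MF A := fun n => if n < k then .var n else .bot

lemma varsBelow_subst_truncVars (k : ℕ) (φ : MF A) : (φ.subst (truncVars k)).varsBelow k := by
  induction φ with
  | var n => by_cases h : n < k <;> simp [subst, truncVars, varsBelow, h]
  | bot => trivial
  | imp φ ψ ihφ ihψ => exact ⟨ihφ, ihψ⟩
  | dia a φ ih => exact ih

lemma depth_subst_truncVars (k : ℕ) (φ : MF A) : (φ.subst (truncVars k)).depth = φ.depth := by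
  induction φ with
  | var n => by_cases h : n < k <;> simp [subst, truncVars, depth, h]
  | bot => rfl
  | imp φ ψ ihφ ihψ => simp [subst, depth, ihφ, ihψ]
  | dia a φ ih => simp [subst, depth, ih]

def signedConjs : List (MF A) → List (MF A)
  | [] => [top]
  | α :: L => (signedConjs L).flatMap fun τ => [α.and τ, α.neg.and τ]

lemma signedConjs_bound {L : List (MF A)} {k d : ℕ}
    (h : ∀ α ∈ L, α.varsBelow k ∧ α.depth ≤ d) :
    ∀ τ ∈ signedConjs L, τ.varsBelow k ∧ τ.depth ≤ d := by
  induction L with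
  | nil => simp [signedConjs, top, neg, varsBelow, depth]
  | cons α L ih =>
    simp only [List.mem_cons, forall_eq_or_imp] at h
    simp only [signedConjs, List.mem_flatMap, List.mem_cons, List.not_mem_nil, or_false]
    rintro _ ⟨τ, hτ, rfl | rfl⟩ <;> simp [h.1, ih h.2 τ hτ]

end MF

section Semantics

variable {A X : Type} {R : A → X → X → Prop} {θ : ℕ → Set X} {w : X}

@[simp] lemma satM_neg {φ : MF A} : satM R θ w φ.neg ↔ ¬ satM R θ w φ := Iff.rfl

@[simp] lemma satM_and {φ ψ : MF A} :
    satM R θ w (φ.and ψ) ↔ satM R θ w φ ∧ satM R θ w ψ := by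
  simp [MF.and, satM]

@[simp] lemma satM_or {φ ψ : MF A} :
    satM R θ w (φ.or ψ) ↔ satM R θ w φ ∨ satM R θ w ψ := by
  simp [MF.or, satM, or_iff_not_imp_left]

@[simp] lemma satM_iff {φ ψ : MF A} :
    satM R θ w (φ.iff ψ) ↔ (satM R θ w φ ↔ satM R θ w ψ) := by
  simp [MF.iff, satM, iff_iff_implies_and_implies]

lemma satM_bigOr {l : List (MF A)} : satM R θ w (MF.bigOr l) ↔ ∃ φ ∈ l, satM R θ w φ := by
  induction l with
  | nil => simp [MF.bigOr, satM]
  | cons φ l ih => simp [MF.bigOr, ih]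

lemma satM_subst_truncVars {k : ℕ} (hθ : ∀ n, k ≤ n → θ n = ∅) (φ : MF A) :
    satM R θ w (φ.subst (MF.truncVars k)) ↔ satM R θ w φ := by
  induction φ generalizing w with
  | var n =>
    by_cases h : n < k
    · simp [MF.subst, MF.truncVars, h]
    · simp [MF.subst, MF.truncVars, h, satM, hθ n (not_lt.1 h)]
  | bot => rfl
  | imp φ ψ ihφ ihψ => exact imp_congr ihφ ihψ
  | dia a φ ih => exact exists_congr fun v => and_congr_right fun _ => ih

lemma exists_mem_signedConjs (L : List (MF A)) (R : A → X → X → Prop) (θ : ℕ → Set X) (w : X) :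
    ∃ τ ∈ MF.signedConjs L, satM R θ w τ := by
  induction L with
  | nil => exact ⟨MF.top, List.mem_singleton_self _, fun h => h⟩
  | cons α L ih =>
    obtain ⟨τ, hτ, hw⟩ := ih
    by_cases hα : satM R θ w α
    · exact ⟨α.and τ, List.mem_flatMap.2 ⟨τ, hτ, by simp⟩, satM_and.2 ⟨hα, hw⟩⟩
    · exact ⟨α.neg.and τ, List.mem_flatMap.2 ⟨τ, hτ, by simp⟩, satM_and.2 ⟨hα, hw⟩⟩

lemma satM_iff_of_mem_signedConjs {L : List (MF A)} {τ : MF A} (hτ : τ ∈ MF.signedConjs L)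
    {x y : X} (hx : satM R θ x τ) (hy : satM R θ y τ) :
    ∀ α ∈ L, (satM R θ x α ↔ satM R θ y α) := by
  induction L generalizing τ with
  | nil => simp
  | cons α L ih =>
    obtain ⟨σ, hσ, hτσ⟩ := List.mem_flatMap.1 hτ
    simp only [List.mem_cons, List.not_mem_nil, or_false] at hτσ
    rw [List.forall_mem_cons]
    rcases hτσ with rfl | rfl <;> simp only [satM_and, satM_neg] at hx hy
    · exact ⟨iff_of_true hx.1 hy.1, ih hσ hx.2 hy.2⟩
    · exact ⟨iff_of_false hx.1 hy.1, ih hσ hx.2 hy.2⟩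

end Semantics

section ModalEquivalence

variable {A X : Type} {R : A → X → X → Prop} {θ : ℕ → Set X} {k d e : ℕ} {x y : X}

lemma modEq_equivalence : Equivalence (modEq R θ k d) where
  refl _ _ _ _ := Iff.rfl
  symm h φ hφ hd := (h φ hφ hd).symm
  trans h h' φ hφ hd := (h φ hφ hd).trans (h' φ hφ hd)

lemma modEq.of_le (hde : d ≤ e) (h : modEq R θ k e x y) : modEq R θ k d x y :=
  fun φ hφ hd => h φ hφ (hd.trans hde)

lemma modEq_zero_of_forall_mem_iff (h : ∀ n < k, (x ∈ θ n ↔ y ∈ θ n)) : modEq R θ k 0 x y := by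
  intro φ hφ hd
  induction φ with
  | var n => exact h n hφ
  | bot => rfl
  | imp φ ψ ihφ ihψ =>
    simp only [MF.depth, nonpos_iff_eq_zero, Nat.max_eq_zero_iff] at hd
    exact imp_congr (ihφ hφ.1 hd.1.le) (ihψ hφ.2 hd.2.le)
  | dia a φ ih => simp [MF.depth] at hd

def BackAndForth (R : A → X → X → Prop) (E : X → X → Prop) (x y : X) : Prop :=
  ∀ a, (∀ v, R a x v → ∃ v', R a y v' ∧ E v v') ∧ (∀ v', R a y v' → ∃ v, R a x v ∧ E v v')

lemma BackAndForth.mono {E E' : X → X → Prop} (hE : ∀ u v, E u v → E' u v)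
    (h : BackAndForth R E x y) : BackAndForth R E' x y := fun a =>
  ⟨fun v hv => (h a).1 v hv |>.imp fun _ ⟨hR, huv⟩ => ⟨hR, hE _ _ huv⟩,
    fun v' hv' => (h a).2 v' hv' |>.imp fun _ ⟨hR, huv⟩ => ⟨hR, hE _ _ huv⟩⟩

lemma modEq_succ_of_backAndForth (h : modEq R θ k d x y)
    (hbf : BackAndForth R (modEq R θ k d) x y) : modEq R θ k (d + 1) x y := by
  intro φ hφ hd
  induction φ with
  | var n => exact h _ hφ (Nat.zero_le d)
  | bot => rfl
  | imp φ ψ ihφ ihψ =>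
    simp only [MF.depth, max_le_iff] at hd
    exact imp_congr (ihφ hφ.1 hd.1) (ihψ hφ.2 hd.2)
  | dia a φ _ =>
    have hd : φ.depth ≤ d := by simpa [MF.depth] using hd
    constructor
    · rintro ⟨v, hv, hφv⟩
      obtain ⟨v', hv', hvv'⟩ := (hbf a).1 v hv
      exact ⟨v', hv', (hvv' φ hφ hd).1 hφv⟩
    · rintro ⟨v', hv', hφv'⟩
      obtain ⟨v, hv, hvv'⟩ := (hbf a).2 v' hv'
      exact ⟨v, hv, (hvv' φ hφ hd).2 hφv'⟩

lemma modEq.satM_iff_of_vanishing (hθ : ∀ n, k ≤ n → θ n = ∅) (h : modEq R θ k d x y)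
    {φ : MF A} (hφ : φ.depth ≤ d) : satM R θ x φ ↔ satM R θ y φ := by
  have h' := h _ (MF.varsBelow_subst_truncVars k φ) ((MF.depth_subst_truncVars k φ).trans_le hφ)
  rwa [satM_subst_truncVars hθ, satM_subst_truncVars hθ] at h'

end ModalEquivalence

noncomputable def charTypes (A : Type) [Fintype A] (k : ℕ) : ℕ → List (MF A)
  | 0 => MF.signedConjs ((List.range k).map .var)
  | d + 1 => MF.signedConjs (charTypes A k d ++
      (charTypes A k d).flatMap fun τ => (Finset.univ : Finset A).toList.map (MF.dia · τ))

section CharTypes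

variable {A X : Type} [Fintype A] {R : A → X → X → Prop} {θ : ℕ → Set X} {k d : ℕ}

lemma charTypes_bound : ∀ τ ∈ charTypes A k d, τ.varsBelow k ∧ τ.depth ≤ d := by
  induction d with
  | zero =>
    refine MF.signedConjs_bound fun α hα => ?_
    obtain ⟨n, hn, rfl⟩ := List.mem_map.1 hα
    exact ⟨List.mem_range.1 hn, le_rfl⟩
  | succ d ih =>
    refine MF.signedConjs_bound fun α hα => ?_
    rcases List.mem_append.1 hα with hα | hα
    · exact (ih α hα).imp_right (Nat.le_succ_of_le)
    · obtain ⟨τ, hτ, hατ⟩ := List.mem_flatMap.1 hα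
      obtain ⟨a, -, rfl⟩ := List.mem_map.1 hατ
      exact ⟨(ih τ hτ).1, Nat.succ_le_succ (ih τ hτ).2⟩

lemma exists_mem_charTypes (R : A → X → X → Prop) (θ : ℕ → Set X) (x : X) :
    ∃ τ ∈ charTypes A k d, satM R θ x τ := by
  cases d <;> exact exists_mem_signedConjs _ R θ x

lemma modEq_of_mem_charTypes {τ : MF A} (hτ : τ ∈ charTypes A k d) {x y : X}
    (hx : satM R θ x τ) (hy : satM R θ y τ) : modEq R θ k d x y := by
  induction d generalizing τ x y with
  | zero =>
    refine modEq_zero_of_forall_mem_iff fun n hn => ?_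
    exact satM_iff_of_mem_signedConjs hτ hx hy (.var n)
      (List.mem_map.2 ⟨n, List.mem_range.2 hn, rfl⟩)
  | succ d ih =>
    have hagree := satM_iff_of_mem_signedConjs hτ hx hy
    have hdia : ∀ a, ∀ σ ∈ charTypes A k d, (satM R θ x (.dia a σ) ↔ satM R θ y (.dia a σ)) :=
      fun a σ hσ => hagree _ <| List.mem_append_right _ <| List.mem_flatMap.2
        ⟨σ, hσ, List.mem_map.2 ⟨a, Finset.mem_toList.2 (Finset.mem_univ a), rfl⟩⟩
    refine modEq_succ_of_backAndForth ?_ fun a => ⟨fun v hv => ?_, fun v' hv' => ?_⟩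
    · obtain ⟨σ, hσ, hxσ⟩ := exists_mem_charTypes (d := d) R θ x
      exact ih hσ hxσ ((hagree σ (List.mem_append_left _ hσ)).1 hxσ)
    · obtain ⟨σ, hσ, hvσ⟩ := exists_mem_charTypes (d := d) R θ v
      obtain ⟨v', hv', hv'σ⟩ := (hdia a σ hσ).1 ⟨v, hv, hvσ⟩
      exact ⟨v', hv', ih hσ hvσ hv'σ⟩
    · obtain ⟨σ, hσ, hv'σ⟩ := exists_mem_charTypes (d := d) R θ v'
      obtain ⟨v, hv, hvσ⟩ := (hdia a σ hσ).2 ⟨v', hv', hv'σ⟩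
      exact ⟨v, hv, ih hσ hvσ hv'σ⟩

end CharTypes

section Stages

variable {A X : Type} {R : A → X → X → Prop} {θ : ℕ → Set X} {k d : ℕ} {x y : X}

lemma modEq.exists_rel_modEq [Fintype A] (h : modEq R θ k (d + 1) x y) {a : A} {v : X}
    (hv : R a x v) : ∃ v', R a y v' ∧ modEq R θ k d v v' := by
  obtain ⟨σ, hσ, hvσ⟩ := exists_mem_charTypes (k := k) (d := d) R θ v
  have hdepth : (MF.dia a σ).depth ≤ d + 1 := Nat.succ_le_succ (charTypes_bound σ hσ).2
  obtain ⟨v', hv', hv'σ⟩ := (h (.dia a σ) (charTypes_bound σ hσ).1 hdepth).1 ⟨v, hv, hvσ⟩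
  exact ⟨v', hv', modEq_of_mem_charTypes hσ hvσ hv'σ⟩

theorem modEq_succ_iff [Fintype A] :
    modEq R θ k (d + 1) x y ↔ modEq R θ k d x y ∧ BackAndForth R (modEq R θ k d) x y := by
  refine ⟨fun h => ⟨h.of_le d.le_succ, fun a => ⟨fun v hv => h.exists_rel_modEq hv,
    fun v' hv' => ?_⟩⟩, fun h => modEq_succ_of_backAndForth h.1 h.2⟩
  obtain ⟨v, hv, hv'v⟩ := (modEq_equivalence.symm h).exists_rel_modEq hv'
  exact ⟨v, hv, modEq_equivalence.symm hv'v⟩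

lemma famEq_eqClasses_union_diaPre {E : X → X → Prop} (hE : Equivalence E) :
    famEq (eqClasses E ∪ {V' | ∃ a : A, ∃ V ∈ eqClasses E, V' = diaPre (R a) V}) x y ↔
      E x y ∧ BackAndForth R E x y := by
  constructor
  · intro h
    refine ⟨(h _ (Or.inl ⟨x, rfl⟩)).1 (hE.refl x), fun a => ⟨fun v hv => ?_, fun v' hv' => ?_⟩⟩
    · obtain ⟨v', hvv', hv'⟩ := (h _ (Or.inr ⟨a, _, ⟨v, rfl⟩, rfl⟩)).1 ⟨v, hE.refl v, hv⟩
      exact ⟨v', hv', hvv'⟩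
    · obtain ⟨v, hv'v, hv⟩ := (h _ (Or.inr ⟨a, _, ⟨v', rfl⟩, rfl⟩)).2 ⟨v', hE.refl v', hv'⟩
      exact ⟨v, hv, hE.symm hv'v⟩
  · rintro ⟨hxy, hbf⟩ V (⟨z, rfl⟩ | ⟨a, _, ⟨z, rfl⟩, rfl⟩)
    · exact ⟨fun hx => hE.trans hx hxy, fun hy => hE.trans hy (hE.symm hxy)⟩
    · constructor
      · rintro ⟨v, hzv, hv⟩
        obtain ⟨v', hv', hvv'⟩ := (hbf a).1 v hv
        exact ⟨v', hE.trans hzv hvv', hv'⟩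
      · rintro ⟨v', hzv', hv'⟩
        obtain ⟨v, hv, hvv'⟩ := (hbf a).2 v' hv'
        exact ⟨v, hE.trans hzv' (hE.symm hvv'), hv⟩

theorem stageClasses_image_Iio [Fintype A] (R : A → X → X → Prop) (θ : ℕ → Set X) (k : ℕ) :
    ∀ d, stageClasses R (θ '' Set.Iio k) d = eqClasses (modEq R θ k d)
  | 0 => by
    refine congrArg eqClasses (funext₂ fun x y => propext ?_)
    simp only [famEq, Set.forall_mem_image, Set.mem_Iio]
    exact ⟨modEq_zero_of_forall_mem_iff, fun h n hn => h (.var n) hn le_rfl⟩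
  | d + 1 => by
    rw [stageClasses, stageClasses_image_Iio R θ k d]
    exact congrArg eqClasses (funext₂ fun x y => propext
      ((famEq_eqClasses_union_diaPre modEq_equivalence).trans modEq_succ_iff.symm))

lemma exists_mem_stageClasses_of_mdBlock_le {𝒱 : Set (Set X)} {V : Set X}
    (h : mdBlock R 𝒱 V ≤ d) : ∃ e ≤ d, V ∈ stageClasses R 𝒱 e := by
  have hlt : mdBlock R 𝒱 V < ((d + 1 : ℕ) : ℕ∞) := h.trans_lt (Nat.cast_lt.2 d.lt_succ_self)
  simp only [mdBlock, iInf_lt_iff, Nat.cast_lt] at hlt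
  obtain ⟨e, he, hed⟩ := hlt
  exact ⟨e, Nat.le_of_lt_succ hed, he⟩

lemma modEq_succ_of_mdFam_le [Fintype A] (hmd : mdFam R (θ '' Set.Iio k) ≤ d)
    (h : modEq R θ k d x y) : modEq R θ k (d + 1) x y := by
  have hstages := stageClasses_image_Iio R θ k
  have hV : {z | modEq R θ k (d + 1) x z} ∈ stageUnion R (θ '' Set.Iio k) :=
    Set.mem_iUnion.2 ⟨d + 1, (hstages (d + 1)).symm ▸ ⟨x, rfl⟩⟩
  obtain ⟨e, hed, he⟩ := exists_mem_stageClasses_of_mdBlock_le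
    ((le_iSup₂ (f := fun V _ => mdBlock R _ V) _ hV).trans hmd)
  rw [hstages e] at he
  obtain ⟨z, hz⟩ := he
  have hzx : x ∈ {w | modEq R θ k e z w} := hz ▸ modEq_equivalence.refl x
  show y ∈ {z | modEq R θ k (d + 1) x z}
  rw [hz]
  exact modEq_equivalence.trans hzx (h.of_le hed)

theorem modEqAll_of_mdFam_le [Fintype A] (hmd : mdFam R (θ '' Set.Iio k) ≤ d)
    (h : modEq R θ k d x y) : modEqAll R θ k x y := by
  -- by `modEq_succ_iff`, level `e + 1` is a function of level `e`, so one stable step propagates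
  have hstep : ∀ j {x y}, modEq R θ k (d + j) x y → modEq R θ k (d + j + 1) x y := by
    intro j
    induction j with
    | zero => exact modEq_succ_of_mdFam_le hmd
    | succ j ih =>
      intro x y hxy
      obtain ⟨hxy, hbf⟩ := modEq_succ_iff.1 hxy
      exact modEq_succ_iff.2 ⟨ih hxy, hbf.mono fun _ _ => ih⟩
  have hall : ∀ j, modEq R θ k (d + j) x y := fun j => by
    induction j with
    | zero => exact h
    | succ j ih => exact hstep j ih
  exact fun φ hφ => hall φ.depth φ hφ (Nat.le_add_left _ _)

end Stages

section Depth

variable {A : Type}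

lemma satM_disjSum {I : Type} (F : I → KFrame A) (θ : ∀ i, ℕ → Set (F i).W) (φ : MF A)
    (i : I) (u : (F i).W) :
    satM (disjSum F).R (fun n => {x | x.2 ∈ θ x.1 n}) ⟨i, u⟩ φ ↔ satM (F i).R (θ i) u φ := by
  induction φ generalizing i u with
  | var n => rfl
  | bot => rfl
  | imp φ ψ ihφ ihψ => exact imp_congr (ihφ i u) (ihψ i u)
  | dia a φ ih =>
    constructor
    · rintro ⟨_, ⟨j, u', v, hu, rfl, hR⟩, hv⟩
      obtain ⟨rfl, hu⟩ := Sigma.mk.inj_iff.1 hu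
      obtain rfl := eq_of_heq hu
      exact ⟨v, hR, (ih i v).1 hv⟩
    · rintro ⟨v, hR, hv⟩
      exact ⟨⟨i, v⟩, ⟨i, u, v, rfl, rfl, hR⟩, (ih i v).2 hv⟩

lemma Set.Finite.exists_eq_image_Iio {X : Type} {𝒱 : Set (Set X)} (h𝒱 : 𝒱.Finite) :
    ∃ (k : ℕ) (θ : ℕ → Set X), (∀ n, k ≤ n → θ n = ∅) ∧ 𝒱 = θ '' Set.Iio k := by
  obtain ⟨k, f, -, rfl⟩ := h𝒱.fin_param
  refine ⟨k, fun n => if h : n < k then f ⟨n, h⟩ else ∅, fun n hn => dif_neg hn.not_gt, ?_⟩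
  ext V
  simp only [Set.mem_range, Set.mem_image, Set.mem_Iio]
  constructor
  · rintro ⟨⟨n, hn⟩, rfl⟩
    exact ⟨n, hn, dif_pos hn⟩
  · rintro ⟨n, hn, rfl⟩
    exact ⟨⟨n, hn⟩, by simp [hn]⟩

lemma le_mdLogic_of_not_modEq_succ {𝓕 : Set (KFrame A)} {F : KFrame A} (hF : F ∈ 𝓕)
    {θ : ℕ → Set F.W} {k m : ℕ} (hθ : ∀ n, k ≤ n → θ n = ∅) {x y : F.W}
    (hm : modEq F.R θ k m x y) (hm1 : ¬ modEq F.R θ k (m + 1) x y) :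
    ((m + 1 : ℕ) : ℕ∞) ≤ mdLogic (LogC 𝓕) := by
  obtain ⟨χ, -, -, hχ⟩ : ∃ χ : MF A, χ.varsBelow k ∧ χ.depth ≤ m + 1 ∧
      ¬ (satM F.R θ x χ ↔ satM F.R θ y χ) := by
    simpa [modEq] using hm1
  refine le_iSup_of_le χ (le_iInf₂ fun ψ hψ => ?_)
  by_contra hlt
  have hψm : ψ.depth ≤ m := Nat.lt_succ_iff.1 (by exact_mod_cast not_le.1 hlt)
  have hx := satM_iff.1 (hψ F hF θ x)
  have hy := satM_iff.1 (hψ F hF θ y)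
  exact hχ (hx.trans ((hm.satM_iff_of_vanishing hθ hψm).trans hy.symm))

lemma mdBlock_le_mdLogic [Fintype A] {𝓕 : Set (KFrame A)} {F : KFrame A} (hF : F ∈ 𝓕)
    {θ : ℕ → Set F.W} {k : ℕ} (hθ : ∀ n, k ≤ n → θ n = ∅) {V : Set F.W}
    (hV : V ∈ stageUnion F.R (θ '' Set.Iio k)) :
    mdBlock F.R (θ '' Set.Iio k) V ≤ mdLogic (LogC 𝓕) := by
  classical
  have hex : ∃ d, V ∈ stageClasses F.R (θ '' Set.Iio k) d := Set.mem_iUnion.1 hV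
  obtain ⟨e, he, hmin⟩ : ∃ e, V ∈ stageClasses F.R (θ '' Set.Iio k) e ∧
      ∀ e' < e, V ∉ stageClasses F.R (θ '' Set.Iio k) e' :=
    ⟨Nat.find hex, Nat.find_spec hex, fun _ => Nat.find_min hex⟩
  refine (iInf₂_le e he).trans ?_
  rcases e with _ | m
  · simp
  have hmin := hmin m m.lt_succ_self
  rw [stageClasses_image_Iio] at he hmin
  obtain ⟨x, rfl⟩ := he
  obtain ⟨y, hmy, hm1y⟩ : ∃ y, modEq F.R θ k m x y ∧ ¬ modEq F.R θ k (m + 1) x y := by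
    by_contra! h
    refine hmin ⟨x, Set.ext fun y => ⟨fun hy => hy.of_le m.le_succ, h y⟩⟩
  exact le_mdLogic_of_not_modEq_succ hF hθ hmy hm1y

theorem mdClass_le_mdLogic [Fintype A] (𝓕 : Set (KFrame A)) : mdClass 𝓕 ≤ mdLogic (LogC 𝓕) := by
  refine iSup₂_le fun F hF => iSup₂_le fun 𝒱 h𝒱 => iSup₂_le fun V hV => ?_
  obtain ⟨k, θ, hθ, rfl⟩ := Set.Finite.exists_eq_image_Iio h𝒱
  exact mdBlock_le_mdLogic hF hθ hV

lemma satM_iff_of_mem_charTypes [Fintype A] {𝓕 : Set (KFrame A)}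
    (hclosed : ∀ (I : Type) [Countable I] (F : I → KFrame A),
      (∀ i : I, F i ∈ 𝓕) → disjSum F ∈ 𝓕)
    {k d : ℕ} (hmd : mdClass 𝓕 ≤ d) {τ : MF A} (hτ : τ ∈ charTypes A k d)
    {F F' : KFrame A} (hF : F ∈ 𝓕) (hF' : F' ∈ 𝓕) {θ : ℕ → Set F.W} {θ' : ℕ → Set F'.W}
    {w : F.W} {w' : F'.W} (hw : satM F.R θ w τ) (hw' : satM F'.R θ' w' τ)
    {φ : MF A} (hφ : φ.varsBelow k) : satM F.R θ w φ ↔ satM F'.R θ' w' φ := by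
  let G : Bool → KFrame A := fun i => bif i then F else F'
  let Ξ : ∀ i, ℕ → Set (G i).W := fun i => match i with
    | true => θ
    | false => θ'
  let Θ : ℕ → Set (disjSum G).W := fun n => {x | x.2 ∈ Ξ x.1 n}
  have hG : disjSum G ∈ 𝓕 := hclosed Bool G fun i => by cases i <;> assumption
  have hmdG : mdFam (disjSum G).R (Θ '' Set.Iio k) ≤ d :=
    (le_iSup₂ (f := fun 𝒱 _ => mdFam (disjSum G).R 𝒱) _ ((Set.finite_Iio k).image Θ)).trans
      ((le_iSup₂ (f := fun F _ => mdFrame F) _ hG).trans hmd)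
  have hmod : modEq (disjSum G).R Θ k d ⟨true, w⟩ ⟨false, w'⟩ := modEq_of_mem_charTypes hτ
    ((satM_disjSum G Ξ τ true w).2 hw) ((satM_disjSum G Ξ τ false w').2 hw')
  exact (satM_disjSum G Ξ φ true w).symm.trans
    ((modEqAll_of_mdFam_le hmdG hmod φ hφ).trans (satM_disjSum G Ξ φ false w'))

theorem mdLogic_le_mdClass [Fintype A] (𝓕 : Set (KFrame A))
    (hclosed : ∀ (I : Type) [Countable I] (F : I → KFrame A),
      (∀ i : I, F i ∈ 𝓕) → disjSum F ∈ 𝓕) :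
    mdLogic (LogC 𝓕) ≤ mdClass 𝓕 := by
  classical
  refine iSup_le fun φ => ?_
  induction hmd : mdClass 𝓕 using ENat.recTopCoe with
  | top => exact le_top
  | coe d => ?_
  obtain ⟨k, hk⟩ := φ.exists_varsBelow
  let ψ := MF.bigOr ((charTypes A k d).filter fun τ =>
    ∃ F ∈ 𝓕, ∃ (θ : ℕ → Set F.W) (w : F.W), satM F.R θ w τ ∧ satM F.R θ w φ)
  have hψ : ψ.depth ≤ d :=
    MF.depth_bigOr_le fun τ hτ => (charTypes_bound τ (List.mem_of_mem_filter hτ)).2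
  refine iInf₂_le_of_le ψ ?_ (Nat.cast_le.2 hψ)
  intro F hF θ w
  rw [satM_iff, satM_bigOr]
  constructor
  · intro hφ
    obtain ⟨τ, hτ, hwτ⟩ := exists_mem_charTypes (k := k) (d := d) F.R θ w
    exact ⟨τ, List.mem_filter.2 ⟨hτ, decide_eq_true ⟨F, hF, θ, w, hwτ, hφ⟩⟩, hwτ⟩
  · rintro ⟨τ, hτ, hwτ⟩
    obtain ⟨hτ, hreal⟩ := List.mem_filter.1 hτ
    obtain ⟨F', hF', θ', w', hw'τ, hw'φ⟩ := of_decide_eq_true hreal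
    exact (satM_iff_of_mem_charTypes hclosed hmd.le hτ hF hF' hwτ hw'τ hk).2 hw'φ

end Depth

/-- for a class of Kripke frames closed under countable disjoint sums, the
modal depth of the class equals the modal depth of its logic. -/
theorem stmt14 {A : Type} [Fintype A] (𝓕 : Set (KFrame A))
    (hclosed : ∀ (I : Type) [Countable I] (F : I → KFrame A),
      (∀ i : I, F i ∈ 𝓕) → disjSum F ∈ 𝓕) :
    mdClass 𝓕 = mdLogic (LogC 𝓕) :=
  (mdClass_le_mdLogic 𝓕).antisymm (mdLogic_le_mdClass 𝓕 hclosed)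
end

section
/- Let 𝓕 be a class of Kripke frames over a finite alphabet A and L = Log(𝓕). Then md(L) ≤ md(𝓕) + tra(𝓕) + 1 (an inequality in ω ∪ {ω}, trivially true if md(𝓕) or tra(𝓕) is infinite). -/
set_option maxHeartbeats 1000000

namespace Stmt17

open scoped Classical

variable {A X X1 X2 X3 : Type}

/-! ### Basic satisfaction lemmas -/

@[simp] lemma satM_var {R : A → X → X → Prop} {θ : ℕ → Set X} {w : X} {n : ℕ} :
    satM R θ w (.var n) ↔ w ∈ θ n := Iff.rfl

@[simp] lemma satM_bot {R : A → X → X → Prop} {θ : ℕ → Set X} {w : X} :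
    satM R θ w .bot ↔ False := Iff.rfl

@[simp] lemma satM_imp {R : A → X → X → Prop} {θ : ℕ → Set X} {w : X} {φ ψ : MF A} :
    satM R θ w (.imp φ ψ) ↔ (satM R θ w φ → satM R θ w ψ) := Iff.rfl

@[simp] lemma satM_dia {R : A → X → X → Prop} {θ : ℕ → Set X} {w : X} {a : A} {φ : MF A} :
    satM R θ w (.dia a φ) ↔ ∃ v, R a w v ∧ satM R θ v φ := Iff.rfl

@[simp] lemma satM_neg {R : A → X → X → Prop} {θ : ℕ → Set X} {w : X} {φ : MF A} :
    satM R θ w φ.neg ↔ ¬ satM R θ w φ := by simp [MF.neg]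

@[simp] lemma satM_top {R : A → X → X → Prop} {θ : ℕ → Set X} {w : X} :
    satM R θ w MF.top ↔ True := by simp [MF.top]

@[simp] lemma satM_and {R : A → X → X → Prop} {θ : ℕ → Set X} {w : X} {φ ψ : MF A} :
    satM R θ w (MF.and φ ψ) ↔ satM R θ w φ ∧ satM R θ w ψ := by
  simp [MF.and]

@[simp] lemma satM_or {R : A → X → X → Prop} {θ : ℕ → Set X} {w : X} {φ ψ : MF A} :
    satM R θ w (MF.or φ ψ) ↔ satM R θ w φ ∨ satM R θ w ψ := by
  simp [MF.or]; tauto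

@[simp] lemma satM_box {R : A → X → X → Prop} {θ : ℕ → Set X} {w : X} {a : A} {φ : MF A} :
    satM R θ w (MF.box a φ) ↔ ∀ v, R a w v → satM R θ v φ := by
  simp [MF.box]

lemma satM_iff {R : A → X → X → Prop} {θ : ℕ → Set X} {w : X} {φ ψ : MF A} :
    satM R θ w (MF.iff φ ψ) ↔ (satM R θ w φ ↔ satM R θ w ψ) := by
  simp [MF.iff]; tauto

lemma satM_bigAnd {R : A → X → X → Prop} {θ : ℕ → Set X} {w : X} {l : List (MF A)} :
    satM R θ w (MF.bigAnd l) ↔ ∀ φ ∈ l, satM R θ w φ := by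
  induction l with
  | nil => simp [MF.bigAnd]
  | cons φ r ih => simp [MF.bigAnd, ih]

lemma satM_bigOr {R : A → X → X → Prop} {θ : ℕ → Set X} {w : X} {l : List (MF A)} :
    satM R θ w (MF.bigOr l) ↔ ∃ φ ∈ l, satM R θ w φ := by
  induction l with
  | nil => simp [MF.bigOr]
  | cons φ r ih => simp [MF.bigOr, ih]

/-! ### depth and varsBelow lemmas -/

@[simp] lemma depth_var {n : ℕ} : (MF.var n : MF A).depth = 0 := rfl
@[simp] lemma depth_bot : (MF.bot : MF A).depth = 0 := rfl
@[simp] lemma depth_imp {φ ψ : MF A} : (MF.imp φ ψ).depth = max φ.depth ψ.depth := rfl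
@[simp] lemma depth_dia {a : A} {φ : MF A} : (MF.dia a φ).depth = φ.depth + 1 := rfl

@[simp] lemma depth_neg {φ : MF A} : φ.neg.depth = φ.depth := by simp [MF.neg]
@[simp] lemma depth_top : (MF.top : MF A).depth = 0 := rfl
@[simp] lemma depth_and {φ ψ : MF A} : (MF.and φ ψ).depth = max φ.depth ψ.depth := by
  simp [MF.and]
@[simp] lemma depth_or {φ ψ : MF A} : (MF.or φ ψ).depth = max φ.depth ψ.depth := by
  simp [MF.or]
@[simp] lemma depth_box {a : A} {φ : MF A} : (MF.box a φ).depth = φ.depth + 1 := by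
  simp [MF.box]

lemma depth_bigAnd_le {l : List (MF A)} {d : ℕ} (h : ∀ φ ∈ l, MF.depth φ ≤ d) :
    (MF.bigAnd l).depth ≤ d := by
  induction l with
  | nil => simp [MF.bigAnd]
  | cons φ r ih =>
      simp only [MF.bigAnd, depth_and, max_le_iff]
      exact ⟨h φ (by simp), ih (fun ψ hψ => h ψ (by simp [hψ]))⟩

lemma depth_bigOr_le {l : List (MF A)} {d : ℕ} (h : ∀ φ ∈ l, MF.depth φ ≤ d) :
    (MF.bigOr l).depth ≤ d := by
  induction l with
  | nil => simp [MF.bigOr]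
  | cons φ r ih =>
      simp only [MF.bigOr, depth_or, max_le_iff]
      exact ⟨h φ (by simp), ih (fun ψ hψ => h ψ (by simp [hψ]))⟩

@[simp] lemma varsBelow_var {k n : ℕ} : (MF.var n : MF A).varsBelow k ↔ n < k := Iff.rfl
@[simp] lemma varsBelow_bot {k : ℕ} : (MF.bot : MF A).varsBelow k ↔ True := Iff.rfl
@[simp] lemma varsBelow_imp {k : ℕ} {φ ψ : MF A} :
    (MF.imp φ ψ).varsBelow k ↔ φ.varsBelow k ∧ ψ.varsBelow k := Iff.rfl
@[simp] lemma varsBelow_dia {k : ℕ} {a : A} {φ : MF A} :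
    (MF.dia a φ).varsBelow k ↔ φ.varsBelow k := Iff.rfl
@[simp] lemma varsBelow_neg {k : ℕ} {φ : MF A} : φ.neg.varsBelow k ↔ φ.varsBelow k := by
  simp [MF.neg]
@[simp] lemma varsBelow_top {k : ℕ} : (MF.top : MF A).varsBelow k := by simp [MF.top]
@[simp] lemma varsBelow_and {k : ℕ} {φ ψ : MF A} :
    (MF.and φ ψ).varsBelow k ↔ φ.varsBelow k ∧ ψ.varsBelow k := by simp [MF.and]
@[simp] lemma varsBelow_or {k : ℕ} {φ ψ : MF A} :
    (MF.or φ ψ).varsBelow k ↔ φ.varsBelow k ∧ ψ.varsBelow k := by simp [MF.or]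
@[simp] lemma varsBelow_box {k : ℕ} {a : A} {φ : MF A} :
    (MF.box a φ).varsBelow k ↔ φ.varsBelow k := by simp [MF.box]

lemma varsBelow_bigAnd {k : ℕ} {l : List (MF A)} (h : ∀ φ ∈ l, MF.varsBelow k φ) :
    (MF.bigAnd l).varsBelow k := by
  induction l with
  | nil => simp [MF.bigAnd]
  | cons φ r ih =>
      simp only [MF.bigAnd, varsBelow_and]
      exact ⟨h φ (by simp), ih (fun ψ hψ => h ψ (by simp [hψ]))⟩

lemma varsBelow_bigOr {k : ℕ} {l : List (MF A)} (h : ∀ φ ∈ l, MF.varsBelow k φ) :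
    (MF.bigOr l).varsBelow k := by
  induction l with
  | nil => simp [MF.bigOr]
  | cons φ r ih =>
      simp only [MF.bigOr, varsBelow_or]
      exact ⟨h φ (by simp), ih (fun ψ hψ => h ψ (by simp [hψ]))⟩

lemma varsBelow_mono {k k' : ℕ} (hk : k ≤ k') : ∀ {φ : MF A}, φ.varsBelow k → φ.varsBelow k'
  | .var n, h => lt_of_lt_of_le h hk
  | .bot, _ => trivial
  | .imp φ ψ, h => ⟨varsBelow_mono hk h.1, varsBelow_mono hk h.2⟩
  | .dia _ φ, h => varsBelow_mono (φ := φ) hk h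

lemma exists_varsBelow (φ : MF A) : ∃ k, φ.varsBelow k := by
  induction φ with
  | var n => exact ⟨n + 1, by simp⟩
  | bot => exact ⟨0, trivial⟩
  | imp φ ψ ihφ ihψ =>
      obtain ⟨k1, h1⟩ := ihφ; obtain ⟨k2, h2⟩ := ihψ
      exact ⟨max k1 k2, ⟨varsBelow_mono (le_max_left _ _) h1,
        varsBelow_mono (le_max_right _ _) h2⟩⟩
  | dia a φ ih => obtain ⟨k, h⟩ := ih; exact ⟨k, h⟩

/-! ### crossEq : agreement up to depth d between points of two models -/

def crossEq (R1 : A → X1 → X1 → Prop) (θ1 : ℕ → Set X1) (R2 : A → X2 → X2 → Prop)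
    (θ2 : ℕ → Set X2) (k d : ℕ) (x : X1) (y : X2) : Prop :=
  ∀ φ : MF A, φ.varsBelow k → φ.depth ≤ d → (satM R1 θ1 x φ ↔ satM R2 θ2 y φ)

lemma crossEq_mono {R1 : A → X1 → X1 → Prop} {θ1 : ℕ → Set X1} {R2 : A → X2 → X2 → Prop}
    {θ2 : ℕ → Set X2} {k d d' : ℕ} {x : X1} {y : X2} (h : d ≤ d')
    (hc : crossEq R1 θ1 R2 θ2 k d' x y) : crossEq R1 θ1 R2 θ2 k d x y :=
  fun φ hv hd => hc φ hv (hd.trans h)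

lemma crossEq.symm {R1 : A → X1 → X1 → Prop} {θ1 : ℕ → Set X1} {R2 : A → X2 → X2 → Prop}
    {θ2 : ℕ → Set X2} {k d : ℕ} {x : X1} {y : X2} (hc : crossEq R1 θ1 R2 θ2 k d x y) :
    crossEq R2 θ2 R1 θ1 k d y x :=
  fun φ hv hd => (hc φ hv hd).symm

lemma crossEq.trans {R1 : A → X1 → X1 → Prop} {θ1 : ℕ → Set X1} {R2 : A → X2 → X2 → Prop}
    {θ2 : ℕ → Set X2} {R3 : A → X3 → X3 → Prop} {θ3 : ℕ → Set X3} {k d : ℕ}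
    {x : X1} {y : X2} {z : X3} (h1 : crossEq R1 θ1 R2 θ2 k d x y)
    (h2 : crossEq R2 θ2 R3 θ3 k d y z) : crossEq R1 θ1 R3 θ3 k d x z :=
  fun φ hv hd => (h1 φ hv hd).trans (h2 φ hv hd)

lemma modEq_iff_crossEq {R : A → X → X → Prop} {θ : ℕ → Set X} {k d : ℕ} {a b : X} :
    modEq R θ k d a b ↔ crossEq R θ R θ k d a b := Iff.rfl


/-! ### Finite sets of type formulas -/

/-- All propositional types over variables `p₀,…,p_{k-1}`. -/
noncomputable def propTF (A : Type) (k : ℕ) : Finset (MF A) :=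
  (Finset.range k).powerset.image
    (fun s => MF.bigAnd ((List.range k).map
      (fun i => if i ∈ s then MF.var i else (MF.var i).neg)))

/-- All depth-`d` type formulas over variables `p₀,…,p_{k-1}`. -/
noncomputable def TF (A : Type) [Fintype A] (k : ℕ) : ℕ → Finset (MF A)
  | 0 => propTF A k
  | d + 1 =>
    ((propTF A k) ×ˢ Fintype.piFinset (fun _ : A => (TF A k d).powerset)).image
      (fun p => MF.and p.1 (MF.bigAnd ((Finset.univ : Finset A).toList.map (fun a =>
        MF.and (MF.bigAnd ((p.2 a).toList.map (MF.dia a)))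
          (MF.box a (MF.bigOr (p.2 a).toList))))))

/-- The propositional type of a point. -/
noncomputable def propType (A : Type) {X : Type} (θ : ℕ → Set X) (k : ℕ) (x : X) : MF A :=
  MF.bigAnd ((List.range k).map (fun i => if x ∈ θ i then MF.var i else (MF.var i).neg))

/-- The depth-`d` type of a point of a model. -/
noncomputable def typeOf [Fintype A] (R : A → X → X → Prop) (θ : ℕ → Set X) (k : ℕ) :
    ℕ → X → MF A
  | 0, x => propType A θ k x
  | d + 1, x =>
    MF.and (propType A θ k x)
      (MF.bigAnd ((Finset.univ : Finset A).toList.map (fun a =>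
        MF.and (MF.bigAnd ((((TF A k d).filter
              (fun t => ∃ x', R a x x' ∧ typeOf R θ k d x' = t)).toList).map (MF.dia a)))
          (MF.box a (MF.bigOr ((TF A k d).filter
              (fun t => ∃ x', R a x x' ∧ typeOf R θ k d x' = t)).toList)))))

/-- The types of `a`-successors of a point. -/
noncomputable def succTypes [Fintype A] (R : A → X → X → Prop) (θ : ℕ → Set X) (k d : ℕ)
    (a : A) (x : X) : Finset (MF A) :=
  (TF A k d).filter (fun t => ∃ x', R a x x' ∧ typeOf R θ k d x' = t)

lemma typeOf_zero [Fintype A] {R : A → X → X → Prop} {θ : ℕ → Set X} {k : ℕ} {x : X} :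
    typeOf R θ k 0 x = propType A θ k x := by simp [typeOf]

lemma typeOf_succ [Fintype A] {R : A → X → X → Prop} {θ : ℕ → Set X} {k d : ℕ} {x : X} :
    typeOf R θ k (d + 1) x =
      MF.and (propType A θ k x)
        (MF.bigAnd ((Finset.univ : Finset A).toList.map (fun a =>
          MF.and (MF.bigAnd ((succTypes R θ k d a x).toList.map (MF.dia a)))
            (MF.box a (MF.bigOr (succTypes R θ k d a x).toList))))) := by
  simp [typeOf, succTypes]

lemma propType_mem {θ : ℕ → Set X} {k : ℕ} {x : X} : propType A θ k x ∈ propTF A k := by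
  refine Finset.mem_image.mpr ⟨(Finset.range k).filter (fun i => x ∈ θ i),
    Finset.mem_powerset.mpr (Finset.filter_subset _ _), ?_⟩
  unfold propType
  congr 1
  refine List.map_congr_left ?_
  intro i hi
  have h : (i ∈ (Finset.range k).filter (fun i => x ∈ θ i)) ↔ x ∈ θ i := by
    simp [Finset.mem_filter, Finset.mem_range, List.mem_range.mp hi]
  exact if_congr h rfl rfl

lemma typeOf_mem [Fintype A] {R : A → X → X → Prop} {θ : ℕ → Set X} {k : ℕ} :
    ∀ {d : ℕ} {x : X}, typeOf R θ k d x ∈ TF A k d := by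
  intro d
  induction d with
  | zero => intro x; rw [typeOf_zero]; exact propType_mem
  | succ d ih =>
      intro x
      rw [typeOf_succ]
      show _ ∈ TF A k (d + 1)
      rw [TF]
      refine Finset.mem_image.mpr
        ⟨(propType A θ k x, fun a => succTypes R θ k d a x), ?_, rfl⟩
      rw [Finset.mem_product]
      exact ⟨propType_mem, Fintype.mem_piFinset.mpr
        (fun a => Finset.mem_powerset.mpr (Finset.filter_subset _ _))⟩

lemma propTF_spec {k : ℕ} : ∀ t ∈ propTF A k, t.depth = 0 ∧ t.varsBelow k := by
  intro t ht
  obtain ⟨s, _, rfl⟩ := Finset.mem_image.mp ht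
  constructor
  · refine Nat.le_antisymm (depth_bigAnd_le ?_) (Nat.zero_le _)
    rintro φ hφ
    obtain ⟨i, hi, rfl⟩ := List.mem_map.mp hφ
    split_ifs <;> simp
  · refine varsBelow_bigAnd ?_
    rintro φ hφ
    obtain ⟨i, hi, rfl⟩ := List.mem_map.mp hφ
    have : i < k := List.mem_range.mp hi
    split_ifs <;> simp [this]

lemma TF_spec [Fintype A] {k : ℕ} :
    ∀ {d : ℕ}, ∀ t ∈ TF A k d, t.depth ≤ d ∧ t.varsBelow k := by
  intro d
  induction d with
  | zero =>
      intro t ht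
      obtain ⟨h1, h2⟩ := propTF_spec t ht
      exact ⟨le_of_eq h1, h2⟩
  | succ d ih =>
      intro t ht
      rw [TF] at ht
      obtain ⟨p, hp, rfl⟩ := Finset.mem_image.mp ht
      rw [Finset.mem_product] at hp
      obtain ⟨hp1, hp2⟩ := hp
      have hS : ∀ a : A, ∀ u ∈ p.2 a, u ∈ TF A k d := by
        intro a u hu
        exact Finset.mem_powerset.mp (Fintype.mem_piFinset.mp hp2 a) hu
      have hmain : ∀ ψ ∈ (Finset.univ : Finset A).toList.map (fun a =>
          MF.and (MF.bigAnd ((p.2 a).toList.map (MF.dia a)))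
            (MF.box a (MF.bigOr (p.2 a).toList))),
          ψ.depth ≤ d + 1 ∧ ψ.varsBelow k := by
        intro ψ hψ
        obtain ⟨a, _, rfl⟩ := List.mem_map.mp hψ
        constructor
        · rw [depth_and, max_le_iff]
          constructor
          · refine depth_bigAnd_le ?_
            intro χ hχ
            obtain ⟨u, hu, rfl⟩ := List.mem_map.mp hχ
            rw [depth_dia]
            have := (ih u (hS a u (Finset.mem_toList.mp hu))).1
            omega
          · rw [depth_box]
            have : (MF.bigOr (p.2 a).toList).depth ≤ d := by
              refine depth_bigOr_le ?_
              intro u hu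
              exact (ih u (hS a u (Finset.mem_toList.mp hu))).1
            omega
        · rw [varsBelow_and]
          constructor
          · refine varsBelow_bigAnd ?_
            intro χ hχ
            obtain ⟨u, hu, rfl⟩ := List.mem_map.mp hχ
            rw [varsBelow_dia]
            exact (ih u (hS a u (Finset.mem_toList.mp hu))).2
          · rw [varsBelow_box]
            refine varsBelow_bigOr ?_
            intro u hu
            exact (ih u (hS a u (Finset.mem_toList.mp hu))).2
      constructor
      · rw [depth_and, max_le_iff]
        exact ⟨le_trans (le_of_eq (propTF_spec _ hp1).1) (Nat.zero_le _),
          depth_bigAnd_le (fun ψ hψ => (hmain ψ hψ).1)⟩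
      · rw [varsBelow_and]
        exact ⟨(propTF_spec _ hp1).2, varsBelow_bigAnd (fun ψ hψ => (hmain ψ hψ).2)⟩

lemma typeOf_depth_le [Fintype A] {R : A → X → X → Prop} {θ : ℕ → Set X} {k d : ℕ} {x : X} :
    (typeOf R θ k d x).depth ≤ d := (TF_spec _ typeOf_mem).1

lemma typeOf_varsBelow [Fintype A] {R : A → X → X → Prop} {θ : ℕ → Set X} {k d : ℕ} {x : X} :
    (typeOf R θ k d x).varsBelow k := (TF_spec _ typeOf_mem).2

lemma satM_propType_self {R : A → X → X → Prop} {θ : ℕ → Set X} {k : ℕ} {x : X} :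
    satM R θ x (propType A θ k x) := by
  rw [propType, satM_bigAnd]
  rintro φ hφ
  obtain ⟨i, hi, rfl⟩ := List.mem_map.mp hφ
  split_ifs with h <;> simp [h]

lemma satM_propType_iff {R2 : A → X2 → X2 → Prop} {θ2 : ℕ → Set X2} {y : X2}
    {θ1 : ℕ → Set X1} {k : ℕ} {x : X1} :
    satM R2 θ2 y (propType A θ1 k x) ↔ ∀ i < k, (x ∈ θ1 i ↔ y ∈ θ2 i) := by
  rw [propType, satM_bigAnd]
  constructor
  · intro h i hik
    have := h _ (List.mem_map.mpr ⟨i, List.mem_range.mpr hik, rfl⟩)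
    split_ifs at this with hx
    · simpa using Iff.intro (fun _ => this) (fun _ => hx)
    · rw [satM_neg, satM_var] at this
      exact Iff.intro (fun hh => absurd hh hx) (fun hh => absurd hh this)
  · intro h φ hφ
    obtain ⟨i, hi, rfl⟩ := List.mem_map.mp hφ
    have hik := List.mem_range.mp hi
    split_ifs with hx
    · exact (h i hik).mp hx
    · rw [satM_neg, satM_var]
      exact fun hh => hx ((h i hik).mpr hh)

lemma satM_typeOf_self [Fintype A] {R : A → X → X → Prop} {θ : ℕ → Set X} {k : ℕ} :
    ∀ {d : ℕ} {x : X}, satM R θ x (typeOf R θ k d x) := by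
  intro d
  induction d with
  | zero => intro x; rw [typeOf_zero]; exact satM_propType_self
  | succ d ih =>
      intro x
      rw [typeOf_succ, satM_and]
      refine ⟨satM_propType_self, ?_⟩
      rw [satM_bigAnd]
      intro φ hφ
      obtain ⟨a, _, rfl⟩ := List.mem_map.mp hφ
      rw [satM_and]
      constructor
      · rw [satM_bigAnd]
        intro ψ hψ
        obtain ⟨t, ht, rfl⟩ := List.mem_map.mp hψ
        rw [Finset.mem_toList, succTypes, Finset.mem_filter] at ht
        obtain ⟨htT, x', hx', rfl⟩ := ht
        exact satM_dia.mpr ⟨x', hx', ih⟩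
      · rw [satM_box]
        intro v hv
        rw [satM_bigOr]
        refine ⟨typeOf R θ k d v, ?_, ih⟩
        rw [Finset.mem_toList, succTypes, Finset.mem_filter]
        exact ⟨typeOf_mem, v, hv, rfl⟩

/-! ### Back-and-forth conditions and agreement -/

lemma crossEq_of_prop {R1 : A → X1 → X1 → Prop} {θ1 : ℕ → Set X1} {R2 : A → X2 → X2 → Prop}
    {θ2 : ℕ → Set X2} {k : ℕ} {x : X1} {y : X2}
    (h : ∀ i < k, (x ∈ θ1 i ↔ y ∈ θ2 i)) : crossEq R1 θ1 R2 θ2 k 0 x y := by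
  intro φ
  induction φ with
  | var n => intro hv _; exact h n hv
  | bot => intro _ _; exact Iff.rfl
  | imp φ ψ ihφ ihψ =>
      intro hv hd
      simp only [depth_imp, max_le_iff] at hd
      simp only [satM_imp, ihφ hv.1 hd.1, ihψ hv.2 hd.2]
  | dia a φ _ =>
      intro _ hd
      rw [depth_dia] at hd
      omega
lemma crossEq_succ_of_forthback {R1 : A → X1 → X1 → Prop} {θ1 : ℕ → Set X1}
    {R2 : A → X2 → X2 → Prop} {θ2 : ℕ → Set X2} {k d : ℕ} {x : X1} {y : X2}
    (hp : ∀ i < k, (x ∈ θ1 i ↔ y ∈ θ2 i))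
    (hf : ∀ (a : A) (x' : X1), R1 a x x' → ∃ y', R2 a y y' ∧ crossEq R1 θ1 R2 θ2 k d x' y')
    (hb : ∀ (a : A) (y' : X2), R2 a y y' → ∃ x', R1 a x x' ∧ crossEq R1 θ1 R2 θ2 k d x' y') :
    crossEq R1 θ1 R2 θ2 k (d + 1) x y := by
  intro φ
  induction φ with
  | var n => intro hv _; exact hp n hv
  | bot => intro _ _; exact Iff.rfl
  | imp φ ψ ihφ ihψ =>
      intro hv hd
      simp only [depth_imp, max_le_iff] at hd
      simp only [satM_imp, ihφ hv.1 hd.1, ihψ hv.2 hd.2]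
  | dia a φ _ =>
      intro hv hd
      rw [depth_dia] at hd
      have hdφ : φ.depth ≤ d := by omega
      simp only [satM_dia]
      constructor
      · rintro ⟨x', hx', hsat⟩
        obtain ⟨y', hy', hc⟩ := hf a x' hx'
        exact ⟨y', hy', (hc φ hv hdφ).mp hsat⟩
      · rintro ⟨y', hy', hsat⟩
        obtain ⟨x', hx', hc⟩ := hb a y' hy'
        exact ⟨x', hx', (hc φ hv hdφ).mpr hsat⟩

/-- The fundamental property of type formulas: satisfying the depth-`d` type of `x`
is the same as agreeing with `x` on all `k`-formulas of depth at most `d`. -/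
lemma satM_typeOf_iff [Fintype A] {R1 : A → X1 → X1 → Prop} {θ1 : ℕ → Set X1}
    {R2 : A → X2 → X2 → Prop} {θ2 : ℕ → Set X2} {k : ℕ} :
    ∀ {d : ℕ} {x : X1} {y : X2},
      satM R2 θ2 y (typeOf R1 θ1 k d x) ↔ crossEq R1 θ1 R2 θ2 k d x y := by
  intro d
  induction d with
  | zero =>
      intro x y
      rw [typeOf_zero]
      constructor
      · intro h; exact crossEq_of_prop (satM_propType_iff.mp h)
      · intro h
        refine (h _ (propTF_spec _ propType_mem).2 (le_of_eq (propTF_spec _ propType_mem).1)).mp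
          satM_propType_self
  | succ d ih =>
      intro x y
      constructor
      · intro h
        rw [typeOf_succ, satM_and] at h
        obtain ⟨h1, h2⟩ := h
        rw [satM_bigAnd] at h2
        refine crossEq_succ_of_forthback (satM_propType_iff.mp h1) ?_ ?_
        · intro a x' hx'
          have he := h2 _ (List.mem_map.mpr ⟨a, Finset.mem_toList.mpr (Finset.mem_univ a), rfl⟩)
          rw [satM_and] at he
          have hdia := he.1
          rw [satM_bigAnd] at hdia
          have hmem : MF.dia a (typeOf R1 θ1 k d x') ∈
              (succTypes R1 θ1 k d a x).toList.map (MF.dia a) := by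
            refine List.mem_map.mpr ⟨_, ?_, rfl⟩
            rw [Finset.mem_toList, succTypes, Finset.mem_filter]
            exact ⟨typeOf_mem, x', hx', rfl⟩
          obtain ⟨y', hy', ht⟩ := satM_dia.mp (hdia _ hmem)
          exact ⟨y', hy', ih.mp ht⟩
        · intro a y' hy'
          have he := h2 _ (List.mem_map.mpr ⟨a, Finset.mem_toList.mpr (Finset.mem_univ a), rfl⟩)
          rw [satM_and] at he
          have hbox := he.2
          rw [satM_box] at hbox
          have := hbox y' hy'
          rw [satM_bigOr] at this
          obtain ⟨t, ht, hsat⟩ := this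
          rw [Finset.mem_toList, succTypes, Finset.mem_filter] at ht
          obtain ⟨htT, x', hx', rfl⟩ := ht
          exact ⟨x', hx', ih.mp hsat⟩
      · intro h
        exact (h _ typeOf_varsBelow typeOf_depth_le).mp satM_typeOf_self

/-- Forth step: a `(d+1)`-equivalent pair can match successors up to depth `d`. -/
lemma crossEq_step [Fintype A] {R1 : A → X1 → X1 → Prop} {θ1 : ℕ → Set X1}
    {R2 : A → X2 → X2 → Prop} {θ2 : ℕ → Set X2} {k d : ℕ} {x : X1} {y : X2} {a : A} {x' : X1}
    (h : crossEq R1 θ1 R2 θ2 k (d + 1) x y) (hs : R1 a x x') :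
    ∃ y', R2 a y y' ∧ crossEq R1 θ1 R2 θ2 k d x' y' := by
  by_contra hc
  push_neg at hc
  have hx : satM R1 θ1 x (.dia a (typeOf R1 θ1 k d x')) := ⟨x', hs, satM_typeOf_self⟩
  have hdep : (MF.dia a (typeOf R1 θ1 k d x')).depth ≤ d + 1 := by
    rw [depth_dia]; exact Nat.add_le_add_right typeOf_depth_le 1
  have hy := (h _ (varsBelow_dia.mpr typeOf_varsBelow) hdep).mp hx
  obtain ⟨y', hy', ht⟩ := satM_dia.mp hy
  exact hc y' hy' (satM_typeOf_iff.mp ht)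


/-! ### Stage equivalences and the modal-depth bound within one model -/

def famAt (R : A → X → X → Prop) (𝒱 : Set (Set X)) : ℕ → Set (Set X)
  | 0 => 𝒱
  | d + 1 => stageClasses R 𝒱 d ∪
      {V' | ∃ a : A, ∃ V ∈ stageClasses R 𝒱 d, V' = diaPre (R a) V}

def Ed (R : A → X → X → Prop) (𝒱 : Set (Set X)) (d : ℕ) : X → X → Prop :=
  famEq (famAt R 𝒱 d)

lemma stageClasses_eq_Ed {R : A → X → X → Prop} {𝒱 : Set (Set X)} :
    ∀ d, stageClasses R 𝒱 d = eqClasses (Ed R 𝒱 d)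
  | 0 => rfl
  | d + 1 => rfl

lemma famEq_refl {𝒱 : Set (Set X)} (x : X) : famEq 𝒱 x x := fun _ _ => Iff.rfl

lemma famEq_symm {𝒱 : Set (Set X)} {x y : X} (h : famEq 𝒱 x y) : famEq 𝒱 y x :=
  fun V hV => (h V hV).symm

lemma famEq_trans {𝒱 : Set (Set X)} {x y z : X} (h1 : famEq 𝒱 x y) (h2 : famEq 𝒱 y z) :
    famEq 𝒱 x z := fun V hV => (h1 V hV).trans (h2 V hV)

lemma Ed_refl {R : A → X → X → Prop} {𝒱 : Set (Set X)} {d : ℕ} (x : X) :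
    Ed R 𝒱 d x x := famEq_refl x

lemma Ed_symm {R : A → X → X → Prop} {𝒱 : Set (Set X)} {d : ℕ} {x y : X}
    (h : Ed R 𝒱 d x y) : Ed R 𝒱 d y x := famEq_symm h

lemma Ed_trans {R : A → X → X → Prop} {𝒱 : Set (Set X)} {d : ℕ} {x y z : X}
    (h1 : Ed R 𝒱 d x y) (h2 : Ed R 𝒱 d y z) : Ed R 𝒱 d x z := famEq_trans h1 h2

lemma classOf_mem_stage {R : A → X → X → Prop} {𝒱 : Set (Set X)} (d : ℕ) (x : X) :
    {y | Ed R 𝒱 d x y} ∈ stageClasses R 𝒱 d := by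
  rw [stageClasses_eq_Ed]; exact ⟨x, rfl⟩

lemma Ed_succ_le {R : A → X → X → Prop} {𝒱 : Set (Set X)} {d : ℕ} {x y : X}
    (h : Ed R 𝒱 (d + 1) x y) : Ed R 𝒱 d x y := by
  have hU : {w | Ed R 𝒱 d x w} ∈ famAt R 𝒱 (d + 1) := Or.inl (classOf_mem_stage d x)
  exact (h _ hU).mp (Ed_refl x)

lemma Ed_mono {R : A → X → X → Prop} {𝒱 : Set (Set X)} {d d' : ℕ} (hdd : d ≤ d')
    {x y : X} (h : Ed R 𝒱 d' x y) : Ed R 𝒱 d x y := by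
  induction d' with
  | zero => have : d = 0 := by omega
            subst this; exact h
  | succ d' ih =>
      rcases Nat.lt_or_ge d (d' + 1) with hlt | hge
      · exact ih (by omega) (Ed_succ_le h)
      · have : d = d' + 1 := by omega
        subst this; exact h

lemma Ed_zero_iff {R : A → X → X → Prop} {θ : ℕ → Set X} {k : ℕ} {x y : X} :
    Ed R (θ '' Set.Iio k) 0 x y ↔ ∀ i < k, (x ∈ θ i ↔ y ∈ θ i) := by
  constructor
  · intro h i hik
    exact h (θ i) ⟨i, hik, rfl⟩
  · rintro h V ⟨i, hik, rfl⟩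
    exact h i hik

/-- Truth of `k`-formulas of depth at most `d` is invariant along `Ed … d`. -/
lemma satM_iff_of_Ed {R : A → X → X → Prop} {θ : ℕ → Set X} {k : ℕ} :
    ∀ (φ : MF A), φ.varsBelow k → ∀ d, φ.depth ≤ d →
      ∀ x y, Ed R (θ '' Set.Iio k) d x y → (satM R θ x φ ↔ satM R θ y φ) := by
  intro φ
  induction φ with
  | var n =>
      intro hv d _ x y h
      exact (Ed_zero_iff.mp (Ed_mono (Nat.zero_le d) h)) n hv
  | bot => intro _ _ _ _ _ _; exact Iff.rfl
  | imp φ ψ ihφ ihψ =>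
      intro hv d hd x y h
      simp only [depth_imp, max_le_iff] at hd
      simp only [satM_imp, ihφ hv.1 d hd.1 x y h, ihψ hv.2 d hd.2 x y h]
  | dia a φ ih =>
      intro hv d hd x y h
      rw [depth_dia] at hd
      obtain ⟨e, rfl⟩ : ∃ e, d = e + 1 := ⟨d - 1, by omega⟩
      have hde : φ.depth ≤ e := by omega
      simp only [satM_dia]
      constructor
      · rintro ⟨x', hx', hs⟩
        have hU : diaPre (R a) {w | Ed R (θ '' Set.Iio k) e x' w} ∈
            famAt R (θ '' Set.Iio k) (e + 1) :=
          Or.inr ⟨a, _, classOf_mem_stage e x', rfl⟩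
        have hxU : x ∈ diaPre (R a) {w | Ed R (θ '' Set.Iio k) e x' w} :=
          ⟨x', Ed_refl x', hx'⟩
        obtain ⟨y', hy'E, hy'R⟩ := (h _ hU).mp hxU
        exact ⟨y', hy'R, (ih hv e hde x' y' hy'E).mp hs⟩
      · rintro ⟨y', hy', hs⟩
        have h' := Ed_symm h
        have hU : diaPre (R a) {w | Ed R (θ '' Set.Iio k) e y' w} ∈
            famAt R (θ '' Set.Iio k) (e + 1) :=
          Or.inr ⟨a, _, classOf_mem_stage e y', rfl⟩
        have hyU : y ∈ diaPre (R a) {w | Ed R (θ '' Set.Iio k) e y' w} :=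
          ⟨y', Ed_refl y', hy'⟩
        obtain ⟨x', hx'E, hx'R⟩ := (h' _ hU).mp hyU
        exact ⟨x', hx'R, (ih hv e hde y' x' hx'E).mp hs⟩

/-- Agreement on `k`-formulas of depth at most `d` implies `Ed … d`. -/
lemma Ed_of_crossEq [Fintype A] {R : A → X → X → Prop} {θ : ℕ → Set X} {k : ℕ} :
    ∀ (d : ℕ) (x y : X), crossEq R θ R θ k d x y → Ed R (θ '' Set.Iio k) d x y := by
  intro d
  induction d with
  | zero =>
      intro x y h
      refine Ed_zero_iff.mpr (fun i hik => ?_)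
      exact h (.var i) hik (Nat.zero_le 0)
  | succ d ih =>
      intro x y h
      have hclass : ∀ z : X, {w | Ed R (θ '' Set.Iio k) d z w}
          = {w | satM R θ w (typeOf R θ k d z)} := by
        intro z; ext w
        simp only [Set.mem_setOf_eq]
        constructor
        · intro hE
          exact satM_typeOf_iff.mpr (fun φ hv hd => satM_iff_of_Ed φ hv d hd z w hE)
        · intro hs
          exact ih z w (satM_typeOf_iff.mp hs)
      intro U hU
      rcases hU with hU | hU
      · rw [stageClasses_eq_Ed] at hU
        obtain ⟨z, rfl⟩ := hU
        rw [hclass z]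
        exact h _ typeOf_varsBelow (typeOf_depth_le.trans (Nat.le_succ d))
      · obtain ⟨a, V, hV, rfl⟩ := hU
        rw [stageClasses_eq_Ed] at hV
        obtain ⟨z, rfl⟩ := hV
        have hset : diaPre (R a) {w | Ed R (θ '' Set.Iio k) d z w}
            = {w | satM R θ w (.dia a (typeOf R θ k d z))} := by
          rw [hclass z]; ext w
          simp only [diaPre, Set.mem_setOf_eq, satM_dia]
          tauto
        rw [hset]
        exact h _ (varsBelow_dia.mpr typeOf_varsBelow)
          (by rw [depth_dia]; exact Nat.add_le_add_right typeOf_depth_le 1)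

/-- Extracting a uniform stage bound from `mdFam ≤ n`. -/
lemma stage_exists_of_mdFam_le {R : A → X → X → Prop} {𝒱 : Set (Set X)} {n : ℕ}
    (h : mdFam R 𝒱 ≤ (n : ℕ∞)) :
    ∀ V ∈ stageUnion R 𝒱, ∃ d ≤ n, V ∈ stageClasses R 𝒱 d := by
  intro V hV
  have h1 : mdBlock R 𝒱 V ≤ (n : ℕ∞) :=
    le_trans (le_iSup₂ (f := fun V _ => mdBlock R 𝒱 V) V hV) h
  by_contra hc
  push_neg at hc
  have h2 : ((n + 1 : ℕ) : ℕ∞) ≤ mdBlock R 𝒱 V := by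
    rw [mdBlock]
    refine le_iInf₂ (fun d hd => ?_)
    have hnd : n + 1 ≤ d := by
      by_contra hnd
      exact hc d (by omega) hd
    exact_mod_cast hnd
  have h3 : ((n + 1 : ℕ) : ℕ∞) ≤ (n : ℕ∞) := le_trans h2 h1
  have : n + 1 ≤ n := by exact_mod_cast h3
  omega

/-- The one-step stabilization within a single model on a frame of bounded modal depth. -/
lemma crossEq_succ_of_stageBound [Fintype A] {R : A → X → X → Prop} {θ : ℕ → Set X} {k n : ℕ}
    (hF : ∀ V ∈ stageUnion R (θ '' Set.Iio k), ∃ d ≤ n, V ∈ stageClasses R (θ '' Set.Iio k) d)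
    {x y : X} (h : crossEq R θ R θ k n x y) : crossEq R θ R θ k (n + 1) x y := by
  have hE : Ed R (θ '' Set.Iio k) n x y := Ed_of_crossEq n x y h
  have hV : {w | Ed R (θ '' Set.Iio k) (n + 1) x w} ∈ stageUnion R (θ '' Set.Iio k) :=
    Set.mem_iUnion.mpr ⟨n + 1, classOf_mem_stage (n + 1) x⟩
  obtain ⟨d, hdn, hVd⟩ := hF _ hV
  rw [stageClasses_eq_Ed] at hVd
  obtain ⟨z, hz⟩ := hVd
  have hzx : Ed R (θ '' Set.Iio k) d z x := by
    have hx : x ∈ {w | Ed R (θ '' Set.Iio k) (n + 1) x w} := Ed_refl x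
    rw [hz] at hx
    exact hx
  have hzy : Ed R (θ '' Set.Iio k) d z y := Ed_trans hzx (Ed_mono hdn hE)
  have hy : y ∈ {w | Ed R (θ '' Set.Iio k) (n + 1) x w} := by rw [hz]; exact hzy
  intro φ hv hd
  exact satM_iff_of_Ed φ hv (n + 1) hd x y hy

/-- Full stabilization: within a model of stage bound `n`, depth-`n` agreement propagates. -/
lemma crossEq_step_all [Fintype A] {R : A → X → X → Prop} {θ : ℕ → Set X} {k n : ℕ}
    (hF : ∀ V ∈ stageUnion R (θ '' Set.Iio k), ∃ d ≤ n, V ∈ stageClasses R (θ '' Set.Iio k) d) :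
    ∀ (j : ℕ) (x y : X), crossEq R θ R θ k (n + j) x y → crossEq R θ R θ k (n + j + 1) x y := by
  intro j
  induction j with
  | zero => intro x y h; exact crossEq_succ_of_stageBound hF h
  | succ j ih =>
      intro x y h
      refine crossEq_succ_of_forthback ?_ ?_ ?_
      · intro i hik
        exact h (.var i) hik (Nat.zero_le _)
      · intro a x' hx'
        obtain ⟨y', hy', hc⟩ := crossEq_step h hx'
        exact ⟨y', hy', ih x' y' hc⟩
      · intro a y' hy'
        obtain ⟨x', hx', hc⟩ := crossEq_step h.symm hy'
        exact ⟨x', hx', (ih y' x' hc).symm⟩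
  -- note: hc : crossEq … y' x', flip as needed

lemma crossEq_all [Fintype A] {R : A → X → X → Prop} {θ : ℕ → Set X} {k n : ℕ}
    (hF : ∀ V ∈ stageUnion R (θ '' Set.Iio k), ∃ d ≤ n, V ∈ stageClasses R (θ '' Set.Iio k) d)
    {x y : X} (h : crossEq R θ R θ k n x y) :
    ∀ φ : MF A, φ.varsBelow k → (satM R θ x φ ↔ satM R θ y φ) := by
  have hall : ∀ j, crossEq R θ R θ k (n + j) x y := by
    intro j
    induction j with
    | zero => exact h
    | succ j ih => exact crossEq_step_all hF j x y ih
  intro φ hv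
  exact hall φ.depth φ hv (by omega)


/-! ### Cross-model stabilization via pretransitivity -/

lemma relPow_snoc {R : X → X → Prop} :
    ∀ {j : ℕ} {a b c : X}, relPow R j a b → R b c → relPow R (j + 1) a c := by
  intro j
  induction j with
  | zero =>
      intro a b c h hbc
      have : a = b := h
      exact ⟨c, this ▸ hbc, rfl⟩
  | succ j ih =>
      intro a b c h hbc
      obtain ⟨w, hw, hwb⟩ := h
      exact ⟨w, hw, ih hwb hbc⟩

section Main

variable [Fintype A] {R1 : A → X1 → X1 → Prop} {θ1 : ℕ → Set X1}
  {R2 : A → X2 → X2 → Prop} {θ2 : ℕ → Set X2} {k : ℕ}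

/-- A failure of `(e+2)`-agreement in presence of `(e+1)`-agreement propagates to successors. -/
lemma drop_step {e : ℕ} {p : X1} {q : X2}
    (h : crossEq R1 θ1 R2 θ2 k (e + 1) p q) (hn : ¬ crossEq R1 θ1 R2 θ2 k (e + 2) p q) :
    ∃ (a : A) (p' : X1) (q' : X2), R1 a p p' ∧ R2 a q q' ∧
      crossEq R1 θ1 R2 θ2 k e p' q' ∧ ¬ crossEq R1 θ1 R2 θ2 k (e + 1) p' q' := by
  by_cases hforth : ∀ (a : A) (p' : X1), R1 a p p' →
      ∃ q', R2 a q q' ∧ crossEq R1 θ1 R2 θ2 k (e + 1) p' q'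
  · by_cases hback : ∀ (a : A) (q' : X2), R2 a q q' →
        ∃ p', R1 a p p' ∧ crossEq R1 θ1 R2 θ2 k (e + 1) p' q'
    · exact absurd (crossEq_succ_of_forthback
        (fun i hik => h (.var i) hik (Nat.zero_le _)) hforth hback) hn
    · push_neg at hback
      obtain ⟨a, q', hq', hfail⟩ := hback
      obtain ⟨p', hp', hc⟩ := crossEq_step h.symm hq'
      exact ⟨a, p', q', hp', hq', hc.symm, fun hcontra => hfail p' hp' hcontra⟩
  · push_neg at hforth
    obtain ⟨a, p', hp', hfail⟩ := hforth
    obtain ⟨q', hq', hc⟩ := crossEq_step h hp'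
    exact ⟨a, p', q', hp', hq', hc, fun hcontra => hfail q' hq' hcontra⟩

/-- Matching a partner along a path, losing one level of agreement at each step. -/
lemma path_partner {e : ℕ} :
    ∀ (i : ℕ) (x : X1) (y : X2) (p : X1), crossEq R1 θ1 R2 θ2 k (e + i) x y →
      relPow (unionRel R1) i x p → ∃ q, crossEq R1 θ1 R2 θ2 k e p q := by
  intro i
  induction i with
  | zero =>
      intro x y p h hp
      have : x = p := hp
      exact ⟨y, this ▸ h⟩
  | succ i ih =>
      intro x y p h hp
      obtain ⟨b, hb, hbp⟩ := hp
      obtain ⟨a, hab⟩ := hb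
      obtain ⟨y', _, hc⟩ := crossEq_step (d := e + i) h hab
      exact ih b y' p hc hbp

/-- Chains of drops along paths. -/
lemma drop_chain {d : ℕ} {x : X1} {y : X2}
    (h : crossEq R1 θ1 R2 θ2 k d x y) (hn : ¬ crossEq R1 θ1 R2 θ2 k (d + 1) x y) :
    ∀ j : ℕ, j ≤ d → ∃ (p : X1) (q : X2), relPow (unionRel R1) j x p ∧
      crossEq R1 θ1 R2 θ2 k (d - j) p q ∧ ¬ crossEq R1 θ1 R2 θ2 k (d - j + 1) p q := by
  intro j
  induction j with
  | zero =>
      intro _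
      exact ⟨x, y, rfl, by simpa using h, by simpa using hn⟩
  | succ j ih =>
      intro hj
      obtain ⟨p, q, hp, hc, hnc⟩ := ih (by omega)
      have harith : d - j = (d - (j + 1)) + 1 := by omega
      rw [harith] at hc hnc
      have hnc' : ¬ crossEq R1 θ1 R2 θ2 k ((d - (j + 1)) + 2) p q := hnc
      obtain ⟨a, p', q', hp', hq', hc', hnc''⟩ := drop_step hc hnc'
      exact ⟨p', q', relPow_snoc hp ⟨a, hp'⟩, hc', hnc''⟩

/-- MAIN STABILIZATION: over an `m`-transitive frame on the left and a frame of
stage bound `n` on the right, depth-`d` agreement implies depth-`(d+1)` agreement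
whenever `d ≥ n + m + 1`. -/
lemma crossEq_stab {n m : ℕ}
    (hm1 : mTransitive (unionRel R1) m)
    (hF2 : ∀ V ∈ stageUnion R2 (θ2 '' Set.Iio k),
      ∃ d ≤ n, V ∈ stageClasses R2 (θ2 '' Set.Iio k) d)
    {d : ℕ} (hd : n + m + 1 ≤ d) {x : X1} {y : X2}
    (h : crossEq R1 θ1 R2 θ2 k d x y) : crossEq R1 θ1 R2 θ2 k (d + 1) x y := by
  by_contra hn
  obtain ⟨p, q, hpath, hc, hnc⟩ := drop_chain h hn (m + 1) (by omega)
  obtain ⟨i, him, hipath⟩ := hm1 x p hpath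
  have hxy' : crossEq R1 θ1 R2 θ2 k ((d - (m + 1) + 1) + i) x y :=
    crossEq_mono (by omega) h
  obtain ⟨q', hcq'⟩ := path_partner i x y p hxy' hipath
  have hqq : crossEq R2 θ2 R2 θ2 k n q' q := by
    have h1 : crossEq R1 θ1 R2 θ2 k n p q' := crossEq_mono (by omega) hcq'
    have h2 : crossEq R1 θ1 R2 θ2 k n p q := crossEq_mono (by omega) hc
    exact (h1.symm).trans h2
  have hall := crossEq_all hF2 hqq
  refine hnc (fun φ hv hdφ => ?_)
  exact (hcq' φ hv hdφ).trans (hall φ hv)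

/-- KEY LEMMA: depth-`(n+m+1)` agreement between points of models over suitable
frames implies agreement on all `k`-formulas. -/
lemma crossEq_key {n m : ℕ}
    (hm1 : mTransitive (unionRel R1) m)
    (hF2 : ∀ V ∈ stageUnion R2 (θ2 '' Set.Iio k),
      ∃ d ≤ n, V ∈ stageClasses R2 (θ2 '' Set.Iio k) d)
    {x : X1} {y : X2} (h : crossEq R1 θ1 R2 θ2 k (n + m + 1) x y) :
    ∀ φ : MF A, φ.varsBelow k → (satM R1 θ1 x φ ↔ satM R2 θ2 y φ) := by
  have hall : ∀ j, crossEq R1 θ1 R2 θ2 k (n + m + 1 + j) x y := by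
    intro j
    induction j with
    | zero => exact h
    | succ j ih => exact crossEq_stab hm1 hF2 (Nat.le_add_right _ j) ih
  intro φ hv
  exact hall φ.depth φ hv (by omega)

end Main


/-! ### The bounded-depth equivalent formula over a class of frames -/

lemma equiv_formula [Fintype A] {𝓕 : Set (KFrame A)} {n m : ℕ}
    (hn : ∀ F ∈ 𝓕, ∀ θ : ℕ → Set F.W, ∀ k : ℕ, ∀ V ∈ stageUnion F.R (θ '' Set.Iio k),
        ∃ d ≤ n, V ∈ stageClasses F.R (θ '' Set.Iio k) d)
    (hm : ∀ F ∈ 𝓕, mTransitive (unionRel F.R) m)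
    (φ : MF A) {k : ℕ} (hφ : φ.varsBelow k) :
    ∃ ψ : MF A, ψ.depth ≤ n + m + 1 ∧ MF.iff φ ψ ∈ LogC 𝓕 := by
  classical
  set D := n + m + 1 with hD
  set S : Finset (MF A) := (TF A k D).filter
    (fun t => ∀ G ∈ 𝓕, ∀ (θ : ℕ → Set G.W) (w : G.W), satM G.R θ w t → satM G.R θ w φ)
    with hS
  refine ⟨MF.bigOr S.toList, ?_, ?_⟩
  · refine depth_bigOr_le (fun t ht => ?_)
    have := Finset.mem_toList.mp ht
    rw [hS, Finset.mem_filter] at this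
    exact (TF_spec t this.1).1
  · intro F hF θ w
    rw [satM_iff]
    constructor
    · intro hw
      rw [satM_bigOr]
      refine ⟨typeOf F.R θ k D w, ?_, satM_typeOf_self⟩
      rw [Finset.mem_toList, hS, Finset.mem_filter]
      refine ⟨typeOf_mem, ?_⟩
      intro G hG θ' w' hw'
      have hcross : crossEq F.R θ G.R θ' k D w w' := satM_typeOf_iff.mp hw'
      exact (crossEq_key (hm F hF) (hn G hG θ' k) hcross φ hφ).mp hw
    · intro hw
      rw [satM_bigOr] at hw
      obtain ⟨t, ht, hsat⟩ := hw
      rw [Finset.mem_toList, hS, Finset.mem_filter] at ht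
      exact ht.2 F hF θ w hsat

end Stmt17

/-- for any class `𝓕` of Kripke frames with logic `L = Log(𝓕)`,
`md(L) ≤ md(𝓕) + tra(𝓕) + 1` (in `ℕ∞`). -/
theorem stmt17 {A : Type} [Fintype A] (𝓕 : Set (KFrame A)) :
    mdLogic (LogC 𝓕) ≤ mdClass 𝓕 + traClass 𝓕 + 1 := by
  classical
  by_cases hmd : mdClass 𝓕 = ⊤
  · rw [hmd, top_add, top_add]
    exact le_top
  by_cases hStra : {m : ℕ | ∀ F ∈ 𝓕, mTransitive (unionRel F.R) m}.Nonempty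
  swap
  · have htra : traClass 𝓕 = ⊤ := by
      rw [traClass, Set.not_nonempty_iff_eq_empty.mp hStra]
      simp
    rw [htra, add_top, top_add]
    exact le_top
  obtain ⟨n, hnEq⟩ := WithTop.ne_top_iff_exists.mp hmd
  set m := sInf {m : ℕ | ∀ F ∈ 𝓕, mTransitive (unionRel F.R) m} with hm
  have hmS : ∀ F ∈ 𝓕, mTransitive (unionRel F.R) m := Nat.sInf_mem hStra
  have hmle : (m : ℕ∞) ≤ traClass 𝓕 := by
    rw [traClass]
    refine le_iInf₂ (fun m' hm' => ?_)
    exact_mod_cast Nat.sInf_le hm'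
  have hnbound : ∀ F ∈ 𝓕, ∀ θ : ℕ → Set F.W, ∀ k : ℕ,
      ∀ V ∈ stageUnion F.R (θ '' Set.Iio k),
        ∃ d ≤ n, V ∈ stageClasses F.R (θ '' Set.Iio k) d := by
    intro F hF θ k
    apply Stmt17.stage_exists_of_mdFam_le
    have hfin : (θ '' Set.Iio k) ∈ {𝒱 : Set (Set F.W) | 𝒱.Finite} :=
      Set.Finite.image θ (Set.finite_Iio k)
    have h1 : mdFam F.R (θ '' Set.Iio k) ≤ mdFrame F :=
      le_iSup₂ (f := fun 𝒱 _ => mdFam F.R 𝒱) _ hfin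
    have h2 : mdFrame F ≤ mdClass 𝓕 := le_iSup₂ (f := fun F _ => mdFrame F) F hF
    exact (h1.trans h2).trans (le_of_eq hnEq.symm)
  rw [mdLogic]
  refine iSup_le (fun φ => ?_)
  obtain ⟨k, hk⟩ := Stmt17.exists_varsBelow φ
  obtain ⟨ψ, hψd, hψL⟩ := Stmt17.equiv_formula hnbound hmS φ hk
  calc ⨅ ψ' ∈ {ψ' : MF A | MF.iff φ ψ' ∈ LogC 𝓕}, (ψ'.depth : ℕ∞)
      ≤ (ψ.depth : ℕ∞) := le_trans (iInf_le _ ψ) (iInf_le _ hψL)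
    _ ≤ ((n + m + 1 : ℕ) : ℕ∞) := by exact_mod_cast hψd
    _ ≤ mdClass 𝓕 + traClass 𝓕 + 1 := by
        push_cast
        exact add_le_add (add_le_add (le_of_eq hnEq) hmle) le_rfl
end
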